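/- arXiv:2202.02296 — 7 statements merged into one kernel-verified Lean document; each statement's English description precedes it below -/
import Mathlib

section
/- Let the perturbations X̂, Ŷ : [0,∞) → (ℝ^m)^V evolve according to the linearized graph-coupled oscillator ODE X̂_i'(t) = Ŷ_i(t), Ŷ_i'(t) = Σ_{j∈N_i} Â_ij X̂_j(t) − X̂_i(t) − α Ŷ_i(t) for all i ∈ V, with α ≥ 0 and Â right-stochastic (0 ≤ Â_ij ≤ 1 for all j ∈ N_i and Σ_{j∈N_i} Â_ij = 1 for every i ∈ V). Then for every node i ∈ V and every t ≥ 0 the following node-wise energy identity holds: (d/dt)[‖Ŷ_i(t)‖²/2 + Σ_{j∈N_i} (Â_ij/2) · ‖X̂_j(t) − X̂_i(t)‖²/2] + α ‖Ŷ_i(t)‖² = Σ_{j∈N_i} Â_ij ⟨(Ŷ_i(t) + Ŷ_j(t))/2, X̂_j(t) − X̂_i(t)⟩. -/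
/-! Differentiating gives `⟪Ŷ_i, Ŷ_i'⟫ + ∑_j (Â_ij/2) ⟪X̂_j' - X̂_i', X̂_j - X̂_i⟫`. Because the
weights `Â_ij` sum to one, `X̂_i` can be moved inside the coupling sum, so
`Ŷ_i' = ∑_j Â_ij (X̂_j - X̂_i) - α Ŷ_i`; each summand then combines with the
potential term through `Ŷ_i + (Ŷ_j - Ŷ_i)/2 = (Ŷ_i + Ŷ_j)/2`. -/

open Finset RealInnerProductSpace

section

variable {E : Type*} [NormedAddCommGroup E] [InnerProductSpace ℝ E]

theorem HasDerivAt.norm_sq_div_two {f : ℝ → E} {f' : E} {x : ℝ} (hf : HasDerivAt f f' x) :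
    HasDerivAt (fun s => ‖f s‖ ^ 2 / 2) ⟪f x, f'⟫ x := by
  simpa using hf.norm_sq.div_const 2

theorem inner_sum_smul_sub_of_sum_eq_one {ι : Type*} {s : Finset ι} {w : ι → ℝ}
    (hw : ∑ j ∈ s, w j = 1) (x : ι → E) (x₀ y : E) :
    ⟪∑ j ∈ s, w j • x j - x₀, y⟫ = ∑ j ∈ s, w j * ⟪x j - x₀, y⟫ := by
  have hx₀ : x₀ = ∑ j ∈ s, w j • x₀ := by rw [← sum_smul, hw, one_smul]
  conv_lhs => rw [hx₀, ← sum_sub_distrib]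
  simp only [← smul_sub, sum_inner, real_inner_smul_left]

theorem inner_sub_add_half_inner (x x₀ y y₀ : E) :
    ⟪x - x₀, y₀⟫ + ⟪x - x₀, y - y₀⟫ / 2 = ⟪(1 / 2 : ℝ) • (y₀ + y), x - x₀⟫ := by
  rw [real_inner_smul_left, inner_add_left, inner_sub_right, real_inner_comm y₀ (x - x₀),
    real_inner_comm y (x - x₀)]
  ring

theorem inner_coupling_add_sum_inner_sub_eq {ι : Type*} {s : Finset ι} {w : ι → ℝ}
    (hw : ∑ j ∈ s, w j = 1) (α : ℝ) (x y : ι → E) (x₀ y₀ : E) :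
    ⟪y₀, ∑ j ∈ s, w j • x j - x₀ - α • y₀⟫ + ∑ j ∈ s, w j / 2 * ⟪x j - x₀, y j - y₀⟫
      = ∑ j ∈ s, w j * ⟪(1 / 2 : ℝ) • (y₀ + y j), x j - x₀⟫ - α * ‖y₀‖ ^ 2 := by
  rw [real_inner_comm, inner_sub_left, inner_sum_smul_sub_of_sum_eq_one hw, real_inner_smul_left,
    real_inner_self_eq_norm_sq, sub_add_eq_add_sub, ← sum_add_distrib]
  congr 1
  refine sum_congr rfl fun j _ => ?_
  rw [← inner_sub_add_half_inner]
  ring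

end

theorem stmt_4_general {v m : ℕ} (G : SimpleGraph (Fin v)) [DecidableRel G.Adj]
    (A : Fin v → Fin v → ℝ)
    (α : ℝ)
    (hArow : ∀ i : Fin v, ∑ j ∈ G.neighborFinset i, A i j = 1)
    (X Y : ℝ → Fin v → EuclideanSpace ℝ (Fin m))
    (hX : ∀ (i : Fin v) (t : ℝ), 0 ≤ t → HasDerivAt (fun s => X s i) (Y t i) t)
    (hY : ∀ (i : Fin v) (t : ℝ), 0 ≤ t →
      HasDerivAt (fun s => Y s i)
        ((∑ j ∈ G.neighborFinset i, A i j • X t j) - X t i - α • Y t i) t)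
    (i : Fin v) (t : ℝ) (ht : 0 ≤ t) :
    HasDerivAt
      (fun s => ‖Y s i‖ ^ 2 / 2
        + ∑ j ∈ G.neighborFinset i, (A i j / 2) * (‖X s j - X s i‖ ^ 2 / 2))
      ((∑ j ∈ G.neighborFinset i,
          A i j * (inner ℝ (((1:ℝ)/2) • (Y t i + Y t j)) (X t j - X t i) : ℝ))
        - α * ‖Y t i‖ ^ 2) t := by
  have hkinetic := (hY i t ht).norm_sq_div_two
  have hpotential := HasDerivAt.fun_sum (u := G.neighborFinset i) fun j _ =>
    (((hX j t ht).sub (hX i t ht)).norm_sq_div_two).const_mul (A i j / 2)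
  rw [← inner_coupling_add_sum_inner_sub_eq (hArow i)]
  exact hkinetic.add hpotential

/-- **Node-wise energy identity for the damped linearized graph-coupled oscillator system.**
If `X̂_i' = Ŷ_i` and `Ŷ_i' = ∑_{j∈N_i} Â i j • X̂_j − X̂_i − α Ŷ_i` on `[0,∞)` with `α ≥ 0`
and `Â` right-stochastic, then for each node `i` and each `t ≥ 0`,
`(d/dt)[‖Ŷ_i‖²/2 + ∑_{j∈N_i} (Â_ij/2)·‖X̂_j−X̂_i‖²/2] + α‖Ŷ_i‖²
  = ∑_{j∈N_i} Â_ij ⟨(Ŷ_i+Ŷ_j)/2, X̂_j−X̂_i⟩`. -/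
theorem stmt_4 {v m : ℕ} (G : SimpleGraph (Fin v)) [DecidableRel G.Adj]
    (A : Fin v → Fin v → ℝ)
    (hA0 : ∀ i j : Fin v, ¬ G.Adj i j → A i j = 0)
    (α : ℝ) (hα : 0 ≤ α)
    (hA01 : ∀ i j : Fin v, j ∈ G.neighborFinset i → 0 ≤ A i j ∧ A i j ≤ 1)
    (hArow : ∀ i : Fin v, ∑ j ∈ G.neighborFinset i, A i j = 1)
    (X Y : ℝ → Fin v → EuclideanSpace ℝ (Fin m))
    (hX : ∀ (i : Fin v) (t : ℝ), 0 ≤ t → HasDerivAt (fun s => X s i) (Y t i) t)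
    (hY : ∀ (i : Fin v) (t : ℝ), 0 ≤ t →
      HasDerivAt (fun s => Y s i)
        ((∑ j ∈ G.neighborFinset i, A i j • X t j) - X t i - α • Y t i) t)
    (i : Fin v) (t : ℝ) (ht : 0 ≤ t) :
    HasDerivAt
      (fun s => ‖Y s i‖ ^ 2 / 2
        + ∑ j ∈ G.neighborFinset i, (A i j / 2) * (‖X s j - X s i‖ ^ 2 / 2))
      ((∑ j ∈ G.neighborFinset i,
          A i j * (inner ℝ (((1:ℝ)/2) • (Y t i + Y t j)) (X t j - X t i) : ℝ))
        - α * ‖Y t i‖ ^ 2) t :=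
  stmt_4_general G A α hArow X Y hX hY i t ht
end

section
/- Let G be a connected finite undirected simple graph on v ≥ 1 vertices. Then for any node features X : V → ℝ^m and any two nodes i, j ∈ V, ‖X_i − X_j‖² ≤ v (v − 1)² E(X). In particular, if the Dirichlet energy of a trajectory satisfies E(X(t)) ≤ C₁ e^{−C₂ t}, then all pairwise feature differences decay exponentially: ‖X_i(t) − X_j(t)‖² ≤ v (v − 1)² C₁ e^{−C₂ t}. -/
/-- The Dirichlet energy `E(X) = (1/v) ∑_{i∈V} ∑_{j∈N_i} ‖X_i − X_j‖²` of node
features on a graph. -/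
noncomputable def dirichletEnergy {v m : ℕ} (G : SimpleGraph (Fin v)) [DecidableRel G.Adj]
    (X : Fin v → EuclideanSpace ℝ (Fin m)) : ℝ :=
  (1 / (v : ℝ)) * ∑ i : Fin v, ∑ j ∈ G.neighborFinset i, ‖X i - X j‖ ^ 2

section aux
variable {v m : ℕ} (G : SimpleGraph (Fin v)) [DecidableRel G.Adj]
  (X : Fin v → EuclideanSpace ℝ (Fin m))

lemma S_nonneg : 0 ≤ ∑ i : Fin v, ∑ j ∈ G.neighborFinset i, ‖X i - X j‖ ^ 2 :=
  Finset.sum_nonneg fun _ _ => Finset.sum_nonneg fun _ _ => sq_nonneg _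

lemma edge_le {a b : Fin v} (hadj : G.Adj a b) :
    ‖X a - X b‖ ^ 2 ≤ ∑ i : Fin v, ∑ j ∈ G.neighborFinset i, ‖X i - X j‖ ^ 2 := by
  have h1 : ‖X a - X b‖ ^ 2 ≤ ∑ j ∈ G.neighborFinset a, ‖X a - X j‖ ^ 2 :=
    Finset.single_le_sum (f := fun j => ‖X a - X j‖ ^ 2) (fun j _ => sq_nonneg _) ((SimpleGraph.mem_neighborFinset G a b).mpr hadj)
  refine h1.trans ?_
  exact Finset.single_le_sum (f := fun i => ∑ j ∈ G.neighborFinset i, ‖X i - X j‖ ^ 2)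
    (fun i _ => Finset.sum_nonneg fun _ _ => sq_nonneg _) (Finset.mem_univ a)

lemma walk_bound : ∀ {i j : Fin v} (p : G.Walk i j),
    ‖X i - X j‖ ≤ (p.length : ℝ) *
      Real.sqrt (∑ i : Fin v, ∑ j ∈ G.neighborFinset i, ‖X i - X j‖ ^ 2) := by
  intro i j p
  induction p with
  | nil => simp
  | @cons a b c h q ih =>
    have hS := S_nonneg G X
    have h1 : ‖X a - X b‖ ≤
        Real.sqrt (∑ i : Fin v, ∑ j ∈ G.neighborFinset i, ‖X i - X j‖ ^ 2) := by
      have := Real.sqrt_le_sqrt (edge_le G X h)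
      rwa [Real.sqrt_sq (norm_nonneg _)] at this
    calc ‖X a - X c‖ ≤ ‖X a - X b‖ + ‖X b - X c‖ := norm_sub_le_norm_sub_add_norm_sub _ _ _
    _ ≤ Real.sqrt _ + (q.length : ℝ) * Real.sqrt _ := add_le_add h1 ih
    _ = ((q.length + 1 : ℕ) : ℝ) * Real.sqrt _ := by push_cast; ring
    _ = _ := by simp [SimpleGraph.Walk.length_cons]

end aux

/-- **On a connected graph, pairwise feature differences are controlled by the Dirichlet
energy:** `‖X_i − X_j‖² ≤ v (v−1)² E(X)`. In particular, if `E(X(t)) ≤ C₁ e^{−C₂ t}` along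
a trajectory, then all pairwise differences decay exponentially:
`‖X_i(t) − X_j(t)‖² ≤ v (v−1)² C₁ e^{−C₂ t}`. -/
theorem stmt_7 {v m : ℕ} (hv : 1 ≤ v) (G : SimpleGraph (Fin v)) [DecidableRel G.Adj]
    (hconn : G.Connected) :
    (∀ (X : Fin v → EuclideanSpace ℝ (Fin m)) (i j : Fin v),
      ‖X i - X j‖ ^ 2 ≤ (v : ℝ) * ((v : ℝ) - 1) ^ 2 * dirichletEnergy G X) ∧
    (∀ (X : ℝ → Fin v → EuclideanSpace ℝ (Fin m)) (C₁ C₂ : ℝ),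
      (∀ t : ℝ, 0 ≤ t → dirichletEnergy G (X t) ≤ C₁ * Real.exp (-(C₂ * t))) →
      ∀ t : ℝ, 0 ≤ t → ∀ i j : Fin v,
        ‖X t i - X t j‖ ^ 2
          ≤ (v : ℝ) * ((v : ℝ) - 1) ^ 2 * (C₁ * Real.exp (-(C₂ * t)))) := by
  have hvR : (1 : ℝ) ≤ (v : ℝ) := by exact_mod_cast hv
  have key : ∀ (X : Fin v → EuclideanSpace ℝ (Fin m)) (i j : Fin v),
      ‖X i - X j‖ ^ 2 ≤ (v : ℝ) * ((v : ℝ) - 1) ^ 2 * dirichletEnergy G X := by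
    intro X i j
    set S := ∑ i : Fin v, ∑ j ∈ G.neighborFinset i, ‖X i - X j‖ ^ 2 with hSdef
    have hS : 0 ≤ S := S_nonneg G X
    obtain ⟨p⟩ := hconn i j
    set q := p.toPath
    have hlen : (q : G.Walk i j).length < v := by
      have := SimpleGraph.Walk.IsPath.length_lt q.2
      simpa using this
    have hlenR : ((q : G.Walk i j).length : ℝ) ≤ (v : ℝ) - 1 := by
      have : ((q : G.Walk i j).length : ℝ) + 1 ≤ (v : ℝ) := by exact_mod_cast hlen
      linarith
    have h1 : ‖X i - X j‖ ≤ ((v : ℝ) - 1) * Real.sqrt S := by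
      refine (walk_bound G X (q : G.Walk i j)).trans ?_
      exact mul_le_mul_of_nonneg_right hlenR (Real.sqrt_nonneg _)
    have h2 : ‖X i - X j‖ ^ 2 ≤ (((v : ℝ) - 1) * Real.sqrt S) ^ 2 := by
      apply pow_le_pow_left₀ (norm_nonneg _) h1 2
    have h3 : (((v : ℝ) - 1) * Real.sqrt S) ^ 2 = ((v : ℝ) - 1) ^ 2 * S := by
      rw [mul_pow, Real.sq_sqrt hS]
    have hveq : (v : ℝ) * ((v : ℝ) - 1) ^ 2 * dirichletEnergy G X = ((v : ℝ) - 1) ^ 2 * S := by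
      have hv0 : (v : ℝ) ≠ 0 := by linarith
      rw [dirichletEnergy, ← hSdef]
      field_simp
    rw [hveq]
    linarith [h2, h3.le, h3.ge]
  refine ⟨key, ?_⟩
  intro X C₁ C₂ hE t ht i j
  refine (key (X t) i j).trans ?_
  have hc : 0 ≤ (v : ℝ) * ((v : ℝ) - 1) ^ 2 := by positivity
  exact mul_le_mul_of_nonneg_left (hE t ht) hc
end

section
/- Consider one step of the general discrete GraphCON recursion: Yⁿ_i = Y^{n−1}_i + Δt σ(C^{n−1}_i) − γΔt X^{n−1}_i − αΔt Y^{n−1}_i and Xⁿ_i = X^{n−1}_i + Δt Yⁿ_i, where C^{n−1}_i ∈ ℝ^m is arbitrary, |σ(x)| ≤ β for all x ∈ ℝ, and 0 < Δt < min(α/γ, 1/α). Then for every node i: γ ‖Xⁿ_i‖²/2 + ‖Yⁿ_i‖²/2 ≤ γ ‖X^{n−1}_i‖²/2 + ‖Y^{n−1}_i‖²/2 + m Δt β² / (2(α − γΔt)). -/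
lemma scal_graphcon (α γ Δt x y s : ℝ) (hα : 0 < α) (hγ : 0 < γ) (hΔt : 0 < Δt)
    (h1 : γ * Δt < α) (h2 : α * Δt < 1) :
    (α - γ * Δt) * (γ * (x + Δt * (y + Δt * s - γ * Δt * x - α * Δt * y))^2
      + (y + Δt * s - γ * Δt * x - α * Δt * y)^2 - γ * x^2 - y^2) ≤ Δt * s^2 := by
  have hD : 0 < α - γ * Δt := by linarith
  have hA : 0 < 1 - α * Δt := by linarith
  have e1 : 0 ≤ Δt * ((α - γ * Δt) * (y + Δt * s - γ * Δt * x - α * Δt * y) - s)^2 := by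
    positivity
  have e2 : 0 ≤ ((α - γ * Δt) * (α * Δt)) * y^2 := by positivity
  have e3 : 0 ≤ ((α - γ * Δt) * (1 - α * Δt)) *
      ((y + Δt * s - γ * Δt * x - α * Δt * y) - y)^2 := by positivity
  linarith [e1, e2, e3]

/-- **One-step energy bound for the general discrete GraphCON recursion.** If
`Yⁿ = Yⁿ⁻¹ + Δt σ(Cⁿ⁻¹) − γΔt Xⁿ⁻¹ − αΔt Yⁿ⁻¹` and `Xⁿ = Xⁿ⁻¹ + Δt Yⁿ` with arbitrary
coupling value `Cⁿ⁻¹ ∈ ℝ^m`, `|σ| ≤ β` and `0 < Δt < min(α/γ, 1/α)`, then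
`γ‖Xⁿ‖²/2 + ‖Yⁿ‖²/2 ≤ γ‖Xⁿ⁻¹‖²/2 + ‖Yⁿ⁻¹‖²/2 + mΔtβ²/(2(α−γΔt))`. -/
theorem stmt_9 {m : ℕ} (σ : ℝ → ℝ) (β : ℝ) (hσ : ∀ x : ℝ, |σ x| ≤ β)
    (α γ Δt : ℝ) (hα : 0 < α) (hγ : 0 < γ) (hΔt : 0 < Δt)
    (hΔt1 : Δt < α / γ) (hΔt2 : Δt < 1 / α)
    (C Xold Yold Xnew Ynew : EuclideanSpace ℝ (Fin m))
    (hYnew : ∀ ℓ : Fin m,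
      Ynew ℓ = Yold ℓ + Δt * σ (C ℓ) - γ * Δt * Xold ℓ - α * Δt * Yold ℓ)
    (hXnew : Xnew = Xold + Δt • Ynew) :
    γ * ‖Xnew‖ ^ 2 / 2 + ‖Ynew‖ ^ 2 / 2
      ≤ γ * ‖Xold‖ ^ 2 / 2 + ‖Yold‖ ^ 2 / 2
        + (m : ℝ) * Δt * β ^ 2 / (2 * (α - γ * Δt)) := by
  have hgd : γ * Δt < α := by
    rw [lt_div_iff₀ hγ] at hΔt1; linarith
  have had : α * Δt < 1 := by
    rw [lt_div_iff₀ hα] at hΔt2; linarith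
  have hD : 0 < α - γ * Δt := by linarith
  have hnorm : ∀ v : EuclideanSpace ℝ (Fin m), ‖v‖ ^ 2 = ∑ ℓ, (v ℓ) ^ 2 := by
    intro v
    rw [EuclideanSpace.norm_eq, Real.sq_sqrt (by positivity)]
    simp [sq_abs]
  have key : ∀ ℓ : Fin m, γ * (Xnew ℓ)^2 / 2 + (Ynew ℓ)^2 / 2
      ≤ γ * (Xold ℓ)^2 / 2 + (Yold ℓ)^2 / 2 + Δt * β^2 / (2 * (α - γ * Δt)) := by
    intro ℓ
    have hs2 : (σ (C ℓ))^2 ≤ β^2 := by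
      have h := hσ (C ℓ)
      have h0 : 0 ≤ |σ (C ℓ)| := abs_nonneg _
      nlinarith [sq_abs (σ (C ℓ))]
    have h := scal_graphcon α γ Δt (Xold ℓ) (Yold ℓ) (σ (C ℓ)) hα hγ hΔt hgd had
    have hx : Xnew ℓ = Xold ℓ + Δt * Ynew ℓ := by
      rw [hXnew]; simp [PiLp.add_apply, PiLp.smul_apply, smul_eq_mul]
    have hx' : Xnew ℓ = Xold ℓ + Δt *
        (Yold ℓ + Δt * σ (C ℓ) - γ * Δt * Xold ℓ - α * Δt * Yold ℓ) := by
      rw [hx, hYnew ℓ]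
    rw [hx', hYnew ℓ]
    have hchain : (α - γ * Δt) * (γ * (Xold ℓ + Δt * (Yold ℓ + Δt * σ (C ℓ)
        - γ * Δt * Xold ℓ - α * Δt * Yold ℓ))^2
        + (Yold ℓ + Δt * σ (C ℓ) - γ * Δt * Xold ℓ - α * Δt * Yold ℓ)^2
        - γ * (Xold ℓ)^2 - (Yold ℓ)^2) ≤ Δt * β^2 := by
      nlinarith [h, hs2, hΔt.le]
    have hdiv : γ * (Xold ℓ + Δt * (Yold ℓ + Δt * σ (C ℓ)
        - γ * Δt * Xold ℓ - α * Δt * Yold ℓ))^2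
        + (Yold ℓ + Δt * σ (C ℓ) - γ * Δt * Xold ℓ - α * Δt * Yold ℓ)^2
        - γ * (Xold ℓ)^2 - (Yold ℓ)^2 ≤ Δt * β^2 / (α - γ * Δt) :=
      (le_div_iff₀' hD).mpr hchain
    have heq : Δt * β^2 / (2 * (α - γ * Δt)) = (Δt * β^2 / (α - γ * Δt)) / 2 := by
      rw [div_div]; ring
    rw [heq]
    linarith [hdiv]
  rw [hnorm, hnorm, hnorm, hnorm]
  have hsum : ∑ ℓ : Fin m, (γ * (Xnew ℓ)^2 / 2 + (Ynew ℓ)^2 / 2)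
      ≤ ∑ ℓ : Fin m, (γ * (Xold ℓ)^2 / 2 + (Yold ℓ)^2 / 2
          + Δt * β^2 / (2 * (α - γ * Δt))) :=
    Finset.sum_le_sum fun ℓ _ => key ℓ
  simp only [Finset.sum_add_distrib, ← Finset.sum_div, ← Finset.mul_sum,
    Finset.sum_const, Finset.card_univ, Fintype.card_fin, nsmul_eq_mul] at hsum
  have hconst : (m : ℝ) * Δt * β ^ 2 / (2 * (α - γ * Δt))
      = Δt * ((m : ℝ) * β ^ 2) / (2 * (α - γ * Δt)) := by ring
  rw [hconst]
  linarith [hsum]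
end

section
/- Let the node features evolve by the general discrete GraphCON recursion Yⁿ_i = Y^{n−1}_i + Δt σ(C^{n−1}_i) − γΔt X^{n−1}_i − αΔt Y^{n−1}_i, Xⁿ_i = X^{n−1}_i + Δt Yⁿ_i for n = 1,…,N, where the coupling values C^{n−1}_i ∈ ℝ^m are arbitrary, |σ(x)| ≤ β for all x ∈ ℝ, and 0 < Δt < min(α/γ, 1/α). Then with tₙ = nΔt, for every node i and every n: ‖Xⁿ_i‖² ≤ ‖X⁰_i‖² + (1/γ)‖Y⁰_i‖² + m β² tₙ / (2γ(α − γΔt)). -/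
/-- Squared Euclidean norm as sum of squared coordinates. -/
lemma graphcon_norm_sq_eq {m : ℕ} (v : EuclideanSpace ℝ (Fin m)) :
    ‖v‖ ^ 2 = ∑ ℓ, (v ℓ) ^ 2 := by
  rw [EuclideanSpace.norm_eq, Real.sq_sqrt (by positivity)]
  simp [Real.norm_eq_abs, sq_abs]

/-- Scalar one-step energy estimate for the GraphCON recursion. -/
lemma graphcon_scalar_step (α γ Δt x y s u : ℝ) (hγ : 0 < γ) (hΔt : 0 < Δt)
    (h1 : γ * Δt < α) (h2 : α * Δt < 1)
    (hu : u = y + Δt * s - γ * Δt * x - α * Δt * y) :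
    γ * (x + Δt * u) ^ 2 + (1 - α * Δt) * u ^ 2
      ≤ γ * x ^ 2 + (1 - α * Δt) * y ^ 2 + Δt * s ^ 2 / (2 * (α - γ * Δt)) := by
  have hD : 0 < 2 * (α - γ * Δt) := by nlinarith
  have hK : 0 < 2 * α - γ * Δt := by nlinarith
  have hr : 0 ≤ 1 - α * Δt := by nlinarith
  have hA : 0 ≤ (2 * α - γ * Δt) *
      (Δt * s ^ 2 - 2 * (α - γ * Δt) * (Δt * (2 * u * s - (2 * α - γ * Δt) * u ^ 2))) := by
    have h3 : (2 * α - γ * Δt) *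
        (Δt * s ^ 2 - 2 * (α - γ * Δt) * (Δt * (2 * u * s - (2 * α - γ * Δt) * u ^ 2)))
        = Δt * (2 * (α - γ * Δt) * ((2 * α - γ * Δt) * u - s) ^ 2 + (γ * Δt) * s ^ 2) := by
      ring
    rw [h3]
    have hgd : (0:ℝ) ≤ γ * Δt := by positivity
    exact mul_nonneg hΔt.le (add_nonneg (mul_nonneg hD.le (sq_nonneg _))
      (mul_nonneg hgd (sq_nonneg _)))
  have hA' : 0 ≤ Δt * s ^ 2
      - 2 * (α - γ * Δt) * (Δt * (2 * u * s - (2 * α - γ * Δt) * u ^ 2)) := by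
    have h4 : 0 ≤ ((2 * α - γ * Δt) *
        (Δt * s ^ 2 - 2 * (α - γ * Δt) * (Δt * (2 * u * s - (2 * α - γ * Δt) * u ^ 2))))
          / (2 * α - γ * Δt) := div_nonneg hA hK.le
    rwa [mul_div_cancel_left₀ _ (ne_of_gt hK)] at h4
  rw [← sub_le_iff_le_add']
  rw [le_div_iff₀ hD]
  have e1 : (γ * (x + Δt * u) ^ 2 + (1 - α * Δt) * u ^ 2
      - (γ * x ^ 2 + (1 - α * Δt) * y ^ 2)) * (2 * (α - γ * Δt))
      = 2 * (α - γ * Δt) * (Δt * (2 * u * s - (2 * α - γ * Δt) * u ^ 2))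
        - (1 - α * Δt) * (u - y) ^ 2 * (2 * (α - γ * Δt)) := by
    subst hu; ring
  have h5 : 0 ≤ (1 - α * Δt) * (u - y) ^ 2 * (2 * (α - γ * Δt)) :=
    mul_nonneg (mul_nonneg hr (sq_nonneg _)) hD.le
  linarith [e1, hA', h5]

/-- **Global bound on hidden node features of the general discrete GraphCON recursion.**
If, for `n = 1,…,N`, `Yⁿ_i = Yⁿ⁻¹_i + Δt σ(Cⁿ⁻¹_i) − γΔt Xⁿ⁻¹_i − αΔt Yⁿ⁻¹_i` and
`Xⁿ_i = Xⁿ⁻¹_i + Δt Yⁿ_i` with arbitrary coupling values `Cⁿ⁻¹_i ∈ ℝ^m`, `|σ| ≤ β` and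
`0 < Δt < min(α/γ, 1/α)`, then with `tₙ = nΔt`,
`‖Xⁿ_i‖² ≤ ‖X⁰_i‖² + (1/γ)‖Y⁰_i‖² + mβ²tₙ/(2γ(α−γΔt))` for every node `i` and every
`n ≤ N`. -/
theorem stmt_10 {m vtx : ℕ} (σ : ℝ → ℝ) (β : ℝ) (hσ : ∀ x : ℝ, |σ x| ≤ β)
    (α γ Δt : ℝ) (hα : 0 < α) (hγ : 0 < γ) (hΔt : 0 < Δt)
    (hΔt1 : Δt < α / γ) (hΔt2 : Δt < 1 / α) (N : ℕ)
    (X Y C : ℕ → Fin vtx → EuclideanSpace ℝ (Fin m))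
    (hY : ∀ n : ℕ, 1 ≤ n → n ≤ N → ∀ (i : Fin vtx) (ℓ : Fin m),
      Y n i ℓ = Y (n-1) i ℓ + Δt * σ (C (n-1) i ℓ)
        - γ * Δt * X (n-1) i ℓ - α * Δt * Y (n-1) i ℓ)
    (hX : ∀ n : ℕ, 1 ≤ n → n ≤ N → ∀ i : Fin vtx,
      X n i = X (n-1) i + Δt • Y n i) :
    ∀ (i : Fin vtx) (n : ℕ), n ≤ N →
      ‖X n i‖ ^ 2 ≤ ‖X 0 i‖ ^ 2 + (1 / γ) * ‖Y 0 i‖ ^ 2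
        + (m : ℝ) * β ^ 2 * ((n : ℝ) * Δt) / (2 * γ * (α - γ * Δt)) := by
  have hβ0 : 0 ≤ β := (abs_nonneg _).trans (hσ 0)
  have h1 : γ * Δt < α := by rw [lt_div_iff₀ hγ] at hΔt1; nlinarith
  have h2 : α * Δt < 1 := by rw [lt_div_iff₀ hα] at hΔt2; nlinarith
  have hD : 0 < 2 * (α - γ * Δt) := by nlinarith
  have hr : 0 ≤ 1 - α * Δt := by nlinarith
  intro i n hn
  have expand : ∀ j : ℕ, γ * ‖X j i‖ ^ 2 + (1 - α * Δt) * ‖Y j i‖ ^ 2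
      = ∑ ℓ, (γ * (X j i ℓ) ^ 2 + (1 - α * Δt) * (Y j i ℓ) ^ 2) := by
    intro j
    rw [graphcon_norm_sq_eq (X j i), graphcon_norm_sq_eq (Y j i),
      Finset.mul_sum, Finset.mul_sum, ← Finset.sum_add_distrib]
  have key : ∀ k : ℕ, k ≤ N →
      γ * ‖X k i‖ ^ 2 + (1 - α * Δt) * ‖Y k i‖ ^ 2
        ≤ γ * ‖X 0 i‖ ^ 2 + (1 - α * Δt) * ‖Y 0 i‖ ^ 2
          + (k : ℝ) * ((m : ℝ) * β ^ 2 * Δt / (2 * (α - γ * Δt))) := by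
    intro k
    induction k with
    | zero => intro _; simp
    | succ k ih =>
      intro hk
      have hk' : k ≤ N := by omega
      have ihk := ih hk'
      have hXk : X (k+1) i = X k i + Δt • Y (k+1) i := by
        have h := hX (k+1) (by omega) hk i
        simpa using h
      have hXkℓ : ∀ ℓ : Fin m, X (k+1) i ℓ = X k i ℓ + Δt * Y (k+1) i ℓ := by
        intro ℓ; rw [hXk]; rfl
      have hYk : ∀ ℓ : Fin m, Y (k+1) i ℓ = Y k i ℓ + Δt * σ (C k i ℓ)
          - γ * Δt * X k i ℓ - α * Δt * Y k i ℓ := by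
        intro ℓ
        have h := hY (k+1) (by omega) hk i ℓ
        simpa using h
      have step : γ * ‖X (k+1) i‖ ^ 2 + (1 - α * Δt) * ‖Y (k+1) i‖ ^ 2
          ≤ γ * ‖X k i‖ ^ 2 + (1 - α * Δt) * ‖Y k i‖ ^ 2
            + (m : ℝ) * β ^ 2 * Δt / (2 * (α - γ * Δt)) := by
        rw [expand (k+1), expand k]
        have hsum : ∑ ℓ, (γ * (X (k+1) i ℓ) ^ 2 + (1 - α * Δt) * (Y (k+1) i ℓ) ^ 2)
            ≤ ∑ ℓ : Fin m, (γ * (X k i ℓ) ^ 2 + (1 - α * Δt) * (Y k i ℓ) ^ 2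
              + Δt * β ^ 2 / (2 * (α - γ * Δt))) := by
          apply Finset.sum_le_sum
          intro ℓ _
          set s := σ (C k i ℓ) with hs
          have hs2 : s ^ 2 ≤ β ^ 2 := by
            have h := hσ (C k i ℓ)
            nlinarith [abs_nonneg s, sq_abs s]
          have hstep := graphcon_scalar_step α γ Δt (X k i ℓ) (Y k i ℓ) s (Y (k+1) i ℓ)
            hγ hΔt h1 h2 (by linarith [hYk ℓ])
          have hdiv : Δt * s ^ 2 / (2 * (α - γ * Δt)) ≤ Δt * β ^ 2 / (2 * (α - γ * Δt)) :=
            (div_le_div_iff_of_pos_right hD).mpr (by nlinarith)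
          rw [hXkℓ ℓ]
          linarith
        have hconst : ∑ ℓ : Fin m, (γ * (X k i ℓ) ^ 2 + (1 - α * Δt) * (Y k i ℓ) ^ 2
              + Δt * β ^ 2 / (2 * (α - γ * Δt)))
            = (∑ ℓ, (γ * (X k i ℓ) ^ 2 + (1 - α * Δt) * (Y k i ℓ) ^ 2))
              + (m : ℝ) * β ^ 2 * Δt / (2 * (α - γ * Δt)) := by
          rw [Finset.sum_add_distrib, Finset.sum_const, Finset.card_univ, Fintype.card_fin]
          congr 1
          push_cast
          ring
        rw [hconst] at hsum
        exact hsum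
      push_cast
      linarith
  have hEn := key n hn
  have hY0 : (1 - α * Δt) * ‖Y 0 i‖ ^ 2 ≤ ‖Y 0 i‖ ^ 2 := by
    have h0 : 0 ≤ α * Δt * ‖Y 0 i‖ ^ 2 := by positivity
    nlinarith [h0]
  have hYn : 0 ≤ (1 - α * Δt) * ‖Y n i‖ ^ 2 := mul_nonneg hr (sq_nonneg _)
  refine le_of_mul_le_mul_left ?_ hγ
  have heq : γ * (‖X 0 i‖ ^ 2 + (1 / γ) * ‖Y 0 i‖ ^ 2
        + (m : ℝ) * β ^ 2 * ((n : ℝ) * Δt) / (2 * γ * (α - γ * Δt)))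
      = γ * ‖X 0 i‖ ^ 2 + ‖Y 0 i‖ ^ 2
        + (n : ℝ) * ((m : ℝ) * β ^ 2 * Δt / (2 * (α - γ * Δt))) := by
    have hne : (α - γ * Δt) ≠ 0 := by nlinarith
    field_simp
  rw [heq]
  linarith
end

section
/- Assume Δt ≤ 1/2. For each layer n, the one-step GraphCON-GCN map Φⁿ : ℝ^{2v} → ℝ^{2v} sending Zⁿ⁻¹ = (Xⁿ⁻¹₁, Yⁿ⁻¹₁, …, Xⁿ⁻¹_v, Yⁿ⁻¹_v) to Zⁿ = (Xⁿ₁, Yⁿ₁, …, Xⁿ_v, Yⁿ_v) is differentiable, and at every point z ∈ ℝ^{2v} its Jacobian matrix satisfies ‖DΦⁿ(z)‖_∞ ≤ 1 + Γ Δt / 2, where ‖·‖_∞ is the matrix ∞-norm (maximum absolute row sum). -/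
/-- One step of the GraphCON-GCN recursion, mapping the state
`Z = (X, Y) ∈ ℝ^v × ℝ^v` to the new state, for weight vector `wn`:
`C_i = (wn_i/d_i) X_i + ∑_{j∈N_i} wn_j X_j / √(d_i d_j)`,
`Y'_i = (1 − Δt) Y_i + Δt σ(C_i) − Δt X_i`, `X'_i = X_i + Δt Y'_i`. -/
noncomputable def gcnStep {v : ℕ} (G : SimpleGraph (Fin v)) [DecidableRel G.Adj]
    (d : Fin v → ℝ) (σ : ℝ → ℝ) (Δt : ℝ) (wn : Fin v → ℝ)
    (p : (Fin v → ℝ) × (Fin v → ℝ)) : (Fin v → ℝ) × (Fin v → ℝ) :=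
  let C : Fin v → ℝ := fun i =>
    wn i / d i * p.1 i + ∑ j ∈ G.neighborFinset i, wn j * p.1 j / Real.sqrt (d i * d j)
  let Ynew : Fin v → ℝ := fun i => (1 - Δt) * p.2 i + Δt * σ (C i) - Δt * p.1 i
  (fun i => p.1 i + Δt * Ynew i, Ynew)

/-!
Write the aggregation of the layer as a linear map, `C = A X`. The step is then
`Φ (X, Y) = (X + Δt Y', Y')` with `Y' = (1 - Δt) Y + Δt σ (A X) - Δt X`, whose derivative at `z`
sends `(ξ, η)` to `(ξ + Δt η', η')`, `η' = (1 - Δt) η + Δt diag(σ' (A z.1)) A ξ - Δt ξ`.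
For `0 ≤ Δt ≤ 1` the triangle inequality for sup-norm operator norms gives
`‖η'‖ ≤ 1 + Δt β' ‖A‖`, hence `‖DΦ‖ ≤ 1 + Δt (1 + β' ‖A‖)`. Every row of `A` has absolute
sum at most `D̂ ‖wⁿ‖₁`, because each coefficient `|1 / d_i| = 1 / √(d_i d_i)` or
`1 / √(d_i d_j)` is at most `D̂`; and `1 + Δt (1 + β' D̂ ‖wⁿ‖₁) ≤ 1 + Γ Δt / 2`.
-/

open ContinuousLinearMap

namespace GraphCON

variable {ι : Type*} [Fintype ι]

def velocity (A : (ι → ℝ) →L[ℝ] (ι → ℝ)) (σ : ℝ → ℝ) (Δt : ℝ) (p : (ι → ℝ) × (ι → ℝ)) :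
    ι → ℝ :=
  (1 - Δt) • p.2 + Δt • (σ ∘ A p.1) - Δt • p.1

def step (A : (ι → ℝ) →L[ℝ] (ι → ℝ)) (σ : ℝ → ℝ) (Δt : ℝ) (p : (ι → ℝ) × (ι → ℝ)) :
    (ι → ℝ) × (ι → ℝ) :=
  (p.1 + Δt • velocity A σ Δt p, velocity A σ Δt p)

theorem norm_proj_le_one (i : ι) : ‖(proj i : (ι → ℝ) →L[ℝ] ℝ)‖ ≤ 1 :=
  opNorm_le_bound _ zero_le_one fun x => by simpa using norm_le_pi_norm x i

theorem norm_smul_proj_le (c : ℝ) (i : ι) : ‖c • (proj i : (ι → ℝ) →L[ℝ] ℝ)‖ ≤ |c| :=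
  calc ‖c • (proj i : (ι → ℝ) →L[ℝ] ℝ)‖ ≤ ‖c‖ * ‖(proj i : (ι → ℝ) →L[ℝ] ℝ)‖ := opNorm_smul_le _ _
    _ ≤ |c| := by simpa using mul_le_of_le_one_right (abs_nonneg c) (norm_proj_le_one i)

noncomputable def diagDeriv (σ : ℝ → ℝ) (x : ι → ℝ) : (ι → ℝ) →L[ℝ] (ι → ℝ) :=
  pi fun i => deriv σ (x i) • proj i

theorem hasFDerivAt_comp_left {σ : ℝ → ℝ} (hσ : Differentiable ℝ σ) (x : ι → ℝ) :
    HasFDerivAt (fun y : ι → ℝ => σ ∘ y) (diagDeriv σ x) x :=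
  hasFDerivAt_pi.2 fun i => (hσ (x i)).hasDerivAt.comp_hasFDerivAt x (hasFDerivAt_apply i x)

theorem norm_diagDeriv_le {σ : ℝ → ℝ} {β' : ℝ} (hσ' : ∀ t, |deriv σ t| ≤ β') (x : ι → ℝ) :
    ‖diagDeriv σ x‖ ≤ β' :=
  norm_pi_le_of_le (fun i => (norm_smul_proj_le _ i).trans (hσ' _)) ((abs_nonneg _).trans (hσ' 0))

noncomputable def velocityDeriv (A : (ι → ℝ) →L[ℝ] (ι → ℝ)) (σ : ℝ → ℝ) (Δt : ℝ)
    (z : (ι → ℝ) × (ι → ℝ)) : (ι → ℝ) × (ι → ℝ) →L[ℝ] (ι → ℝ) :=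
  (1 - Δt) • snd ℝ _ _ + Δt • (diagDeriv σ (A z.1)).comp (A.comp (fst ℝ _ _)) - Δt • fst ℝ _ _

noncomputable def stepDeriv (A : (ι → ℝ) →L[ℝ] (ι → ℝ)) (σ : ℝ → ℝ) (Δt : ℝ)
    (z : (ι → ℝ) × (ι → ℝ)) : (ι → ℝ) × (ι → ℝ) →L[ℝ] (ι → ℝ) × (ι → ℝ) :=
  (fst ℝ _ _ + Δt • velocityDeriv A σ Δt z).prod (velocityDeriv A σ Δt z)

theorem hasFDerivAt_velocity (A : (ι → ℝ) →L[ℝ] (ι → ℝ)) {σ : ℝ → ℝ}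
    (hσ : Differentiable ℝ σ) (Δt : ℝ) (z : (ι → ℝ) × (ι → ℝ)) :
    HasFDerivAt (velocity A σ Δt) (velocityDeriv A σ Δt z) z := by
  have hA : HasFDerivAt (fun p : (ι → ℝ) × (ι → ℝ) => A p.1) (A.comp (fst ℝ _ _)) z :=
    A.hasFDerivAt.comp z hasFDerivAt_fst
  exact ((hasFDerivAt_snd.const_smul (1 - Δt)).add
    (((hasFDerivAt_comp_left hσ (A z.1)).comp z hA).const_smul Δt)).sub
    (hasFDerivAt_fst.const_smul Δt)

theorem hasFDerivAt_step (A : (ι → ℝ) →L[ℝ] (ι → ℝ)) {σ : ℝ → ℝ}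
    (hσ : Differentiable ℝ σ) (Δt : ℝ) (z : (ι → ℝ) × (ι → ℝ)) :
    HasFDerivAt (step A σ Δt) (stepDeriv A σ Δt z) z :=
  (hasFDerivAt_fst.add ((hasFDerivAt_velocity A hσ Δt z).const_smul Δt)).prodMk
    (hasFDerivAt_velocity A hσ Δt z)

theorem norm_velocityDeriv_le (A : (ι → ℝ) →L[ℝ] (ι → ℝ)) {σ : ℝ → ℝ} {β' : ℝ}
    (hσ' : ∀ t, |deriv σ t| ≤ β') {Δt : ℝ} (h0 : 0 ≤ Δt) (h1 : Δt ≤ 1)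
    (z : (ι → ℝ) × (ι → ℝ)) :
    ‖velocityDeriv A σ Δt z‖ ≤ 1 + Δt * (β' * ‖A‖) := by
  have hβ' : 0 ≤ β' := (abs_nonneg _).trans (hσ' 0)
  have hcoupling : ‖(diagDeriv σ (A z.1)).comp (A.comp (fst ℝ (ι → ℝ) (ι → ℝ)))‖ ≤ β' * ‖A‖ :=
    calc _ ≤ ‖diagDeriv σ (A z.1)‖ * (‖A‖ * ‖fst ℝ (ι → ℝ) (ι → ℝ)‖) :=
          (opNorm_comp_le _ _).trans (by gcongr; exact opNorm_comp_le _ _)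
      _ ≤ β' * ‖A‖ := mul_le_mul (norm_diagDeriv_le hσ' _)
          (mul_le_of_le_one_right (norm_nonneg _) (norm_fst_le ..)) (by positivity) hβ'
  calc ‖velocityDeriv A σ Δt z‖
      ≤ |1 - Δt| * ‖snd ℝ (ι → ℝ) (ι → ℝ)‖
        + |Δt| * ‖(diagDeriv σ (A z.1)).comp (A.comp (fst ℝ (ι → ℝ) (ι → ℝ)))‖
        + |Δt| * ‖fst ℝ (ι → ℝ) (ι → ℝ)‖ := by
        refine (norm_sub_le _ _).trans (add_le_add ((norm_add_le _ _).trans ?_) ?_) <;>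
          simp only [norm_smul, Real.norm_eq_abs, le_refl]
    _ ≤ (1 - Δt) * 1 + Δt * (β' * ‖A‖) + Δt * 1 := by
        rw [abs_of_nonneg (sub_nonneg.2 h1), abs_of_nonneg h0]
        gcongr
        exacts [norm_snd_le .., norm_fst_le ..]
    _ = 1 + Δt * (β' * ‖A‖) := by ring

theorem norm_stepDeriv_le (A : (ι → ℝ) →L[ℝ] (ι → ℝ)) {σ : ℝ → ℝ} {β' : ℝ}
    (hσ' : ∀ t, |deriv σ t| ≤ β') {Δt : ℝ} (h0 : 0 ≤ Δt) (h1 : Δt ≤ 1)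
    (z : (ι → ℝ) × (ι → ℝ)) :
    ‖stepDeriv A σ Δt z‖ ≤ 1 + Δt * (1 + β' * ‖A‖) := by
  have hβ' : 0 ≤ β' * ‖A‖ := mul_nonneg ((abs_nonneg _).trans (hσ' 0)) (norm_nonneg A)
  have hV := norm_velocityDeriv_le A hσ' h0 h1 z
  rw [stepDeriv, opNorm_prod, Prod.norm_def]
  refine max_le ?_ (hV.trans (by nlinarith))
  calc ‖fst ℝ (ι → ℝ) (ι → ℝ) + Δt • velocityDeriv A σ Δt z‖
      ≤ 1 + Δt * (1 + Δt * (β' * ‖A‖)) := by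
        refine (norm_add_le _ _).trans (add_le_add (norm_fst_le ..) ?_)
        rw [norm_smul, Real.norm_eq_abs, abs_of_nonneg h0]
        gcongr
    _ ≤ 1 + Δt * (1 + β' * ‖A‖) := by
        gcongr 1 + Δt * (1 + ?_)
        exact mul_le_of_le_one_left hβ' h1

noncomputable def gcnCoupling (G : SimpleGraph ι) [DecidableRel G.Adj] (d wn : ι → ℝ) :
    (ι → ℝ) →L[ℝ] (ι → ℝ) :=
  pi fun i => (wn i / d i) • proj i + ∑ j ∈ G.neighborFinset i, (wn j / √(d i * d j)) • proj j

theorem norm_gcnCoupling_le (G : SimpleGraph ι) [DecidableRel G.Adj] {d : ι → ℝ} (wn : ι → ℝ)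
    {D : ℝ} (hD : ∀ i j, 1 / √(d i * d j) ≤ D) :
    ‖gcnCoupling G d wn‖ ≤ D * ∑ j, |wn j| := by
  have hcoef : ∀ i j, |wn j / √(d i * d j)| ≤ D * |wn j| := fun i j => by
    rw [abs_div, abs_of_nonneg (Real.sqrt_nonneg _), div_eq_mul_one_div, mul_comm]
    exact mul_le_mul_of_nonneg_right (hD i j) (abs_nonneg _)
  have hrow : ∀ i, ‖(wn i / d i) • (proj i : (ι → ℝ) →L[ℝ] ℝ)
      + ∑ j ∈ G.neighborFinset i, (wn j / √(d i * d j)) • proj j‖ ≤ D * ∑ j, |wn j| := fun i =>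
    calc _ ≤ ∑ j ∈ (G.neighborFinset i).cons i (G.notMem_neighborFinset_self i), D * |wn j| := by
          rw [Finset.sum_cons]
          refine (norm_add_le _ _).trans (add_le_add ?_ ((norm_sum_le _ _).trans
            (Finset.sum_le_sum fun j _ => (norm_smul_proj_le _ j).trans (hcoef i j))))
          refine (norm_smul_proj_le _ i).trans (le_of_eq_of_le ?_ (hcoef i i))
          rw [Real.sqrt_mul_self_eq_abs, abs_div, abs_div, abs_abs]
      _ ≤ ∑ j, D * |wn j| := Finset.sum_le_univ_sum_of_nonneg fun j =>
          mul_nonneg ((by positivity : (0 : ℝ) ≤ 1 / √(d i * d i)).trans (hD i i)) (abs_nonneg _)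
      _ = D * ∑ j, |wn j| := (Finset.mul_sum _ _ _).symm
  refine norm_pi_le_of_le hrow ?_
  rcases isEmpty_or_nonempty ι with _ | ⟨⟨i⟩⟩
  · simp
  · exact (norm_nonneg _).trans (hrow i)

theorem gcnStep_eq_step {v : ℕ} (G : SimpleGraph (Fin v)) [DecidableRel G.Adj]
    (d : Fin v → ℝ) (σ : ℝ → ℝ) (Δt : ℝ) (wn : Fin v → ℝ) :
    gcnStep G d σ Δt wn = step (gcnCoupling G d wn) σ Δt := by
  funext p
  ext i <;> simp [gcnStep, step, velocity, gcnCoupling, mul_div_right_comm]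

end GraphCON

open GraphCON in
theorem stmt_14_general {v N : ℕ} (G : SimpleGraph (Fin v)) [DecidableRel G.Adj]
    (d : Fin v → ℝ)
    (Δt : ℝ) (hΔt : 0 < Δt) (hΔt2 : Δt ≤ 1 / 2)
    (σ : ℝ → ℝ) (hσdiff : Differentiable ℝ σ)
    (β' : ℝ) (hβ' : ∀ x : ℝ, |deriv σ x| ≤ β')
    (w : Fin N → Fin v → ℝ) (n : Fin N)
    (Dhat Γ : ℝ)
    (hDhat : Dhat = ⨆ i : Fin v, ⨆ j : Fin v, 1 / Real.sqrt (d i * d j))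
    (hΓ : Γ = 6 + 4 * β' * Dhat * ⨆ k : Fin N, ∑ i : Fin v, |w k i|) :
    ∀ z : (Fin v → ℝ) × (Fin v → ℝ),
      ∃ L : ((Fin v → ℝ) × (Fin v → ℝ)) →L[ℝ] ((Fin v → ℝ) × (Fin v → ℝ)),
        HasFDerivAt (gcnStep G d σ Δt (w n)) L z ∧ ‖L‖ ≤ 1 + Γ * Δt / 2 := by
  intro z
  have hDhat_nonneg : 0 ≤ Dhat :=
    hDhat ▸ Real.iSup_nonneg fun i => Real.iSup_nonneg fun j => by positivity
  have hD : ∀ i j, 1 / √(d i * d j) ≤ Dhat := fun i j => hDhat ▸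
    (le_ciSup (f := fun j => 1 / √(d i * d j)) (Finite.bddAbove_range _) j).trans
      (le_ciSup (f := fun i => ⨆ j, 1 / √(d i * d j)) (Finite.bddAbove_range _) i)
  have hW : ∑ i, |w n i| ≤ ⨆ k, ∑ i, |w k i| :=
    le_ciSup (f := fun k => ∑ i, |w k i|) (Finite.bddAbove_range _) n
  have hA : ‖gcnCoupling G d (w n)‖ ≤ Dhat * ⨆ k, ∑ i, |w k i| :=
    (norm_gcnCoupling_le G (w n) hD).trans (mul_le_mul_of_nonneg_left hW hDhat_nonneg)
  have hβ'_nonneg : 0 ≤ β' := (abs_nonneg _).trans (hβ' 0)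
  refine ⟨stepDeriv (gcnCoupling G d (w n)) σ Δt z,
    gcnStep_eq_step G d σ Δt (w n) ▸ hasFDerivAt_step _ hσdiff Δt z,
    (norm_stepDeriv_le _ hβ' hΔt.le (by linarith) z).trans ?_⟩
  rw [hΓ]
  have hK := mul_le_mul_of_nonneg_left (mul_le_mul_of_nonneg_left hA hβ'_nonneg) hΔt.le
  have hK_nonneg := mul_nonneg hΔt.le (mul_nonneg hβ'_nonneg (norm_nonneg (gcnCoupling G d (w n))))
  linarith

/-- **Jacobian bound for the one-step GraphCON-GCN map.** Assuming `Δt ≤ 1/2`, the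
one-step map `Φⁿ : ℝ^{2v} → ℝ^{2v}` is differentiable and at every point its Jacobian
(as an operator with respect to the sup-norm, i.e. in the matrix ∞-norm) satisfies
`‖DΦⁿ(z)‖_∞ ≤ 1 + Γ Δt / 2`, where `D̂ = max_{i,j} 1/√(d_i d_j)` and
`Γ = 6 + 4 β' D̂ max_{1≤n≤N} ‖wⁿ‖₁`. -/
theorem stmt_14 {v N : ℕ} (hv : 0 < v) (G : SimpleGraph (Fin v)) [DecidableRel G.Adj]
    (d : Fin v → ℝ) (hd : ∀ i : Fin v, 1 ≤ d i)
    (Δt : ℝ) (hΔt : 0 < Δt) (hΔt2 : Δt ≤ 1 / 2)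
    (σ : ℝ → ℝ) (hσdiff : Differentiable ℝ σ)
    (β β' : ℝ) (hβ : ∀ x : ℝ, |σ x| ≤ β) (hβ' : ∀ x : ℝ, |deriv σ x| ≤ β')
    (w : Fin N → Fin v → ℝ) (n : Fin N)
    (Dhat Γ : ℝ)
    (hDhat : Dhat = ⨆ i : Fin v, ⨆ j : Fin v, 1 / Real.sqrt (d i * d j))
    (hΓ : Γ = 6 + 4 * β' * Dhat * ⨆ k : Fin N, ∑ i : Fin v, |w k i|) :
    ∀ z : (Fin v → ℝ) × (Fin v → ℝ),
      ∃ L : ((Fin v → ℝ) × (Fin v → ℝ)) →L[ℝ] ((Fin v → ℝ) × (Fin v → ℝ)),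
        HasFDerivAt (gcnStep G d σ Δt (w n)) L z ∧ ‖L‖ ≤ 1 + Γ * Δt / 2 :=
  stmt_14_general G d Δt hΔt hΔt2 σ hσdiff β' hβ' w n Dhat Γ hDhat hΓ
end

section
/- Assume Δt ≤ 1/2 and let the node features be generated by the GraphCON-GCN recursion for n = 1,…,N. Let J(Z^N) = (1/2v) Σ_{i=1}^v (X^N_i − X̄_i)² be the loss as a function of the final concatenated state Z^N, for a fixed target X̄ ∈ ℝ^v. Then every partial derivative of J with respect to an entry of Z^N is bounded in absolute value by (1/v)(max_{1≤i≤v}(|X⁰_i| + |Y⁰_i|) + max_{1≤i≤v}|X̄_i| + β√(NΔt)). -/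
/-- The final state `Z^N` of the GraphCON-GCN recursion run for `N` layers with weight
vectors `W 0, …, W (N−1)` from the initial state `Z0 = (X⁰, Y⁰)`. -/
noncomputable def gcnForward {v N : ℕ} (G : SimpleGraph (Fin v)) [DecidableRel G.Adj]
    (d : Fin v → ℝ) (σ : ℝ → ℝ) (Δt : ℝ) (W : Fin N → Fin v → ℝ)
    (Z0 : (Fin v → ℝ) × (Fin v → ℝ)) : (Fin v → ℝ) × (Fin v → ℝ) :=
  (List.finRange N).foldl (fun p n => gcnStep G d σ Δt (W n) p) Z0

/-!
GraphCON conserves a discrete energy up to the forcing: at every node, with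
`Y' = (1 - Δt) Y + Δt σ(C) - Δt X` and `X' = X + Δt Y'`, eliminating `X` gives
`X² + Y² + Δt σ(C)² - X'² - Y'² = (Y - (1 - Δt) Y')² + Δt (σ(C) - Y')² + Δt (1 - 2Δt) Y'²`,
which is nonnegative for `Δt ≤ 1/2`. Hence `(X^N_i)² + (Y^N_i)² ≤ (X⁰_i)² + (Y⁰_i)² + N Δt β²`,
so `|X^N_i| ≤ |X⁰_i| + |Y⁰_i| + β √(N Δt)`. The loss depends on `X^N` only, and its partial
derivative in `X^N_i` is `(X^N_i - X̄_i) / v`.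
-/

theorem graphCON_energy_le {Δt x y u y' : ℝ} (h0 : 0 ≤ Δt) (h1 : Δt ≤ 1 / 2)
    (hy' : y' = (1 - Δt) * y + Δt * u - Δt * x) :
    (x + Δt * y') ^ 2 + y' ^ 2 ≤ x ^ 2 + y ^ 2 + Δt * u ^ 2 := by
  have key : x ^ 2 + y ^ 2 + Δt * u ^ 2 - ((x + Δt * y') ^ 2 + y' ^ 2)
      = (y - (1 - Δt) * y') ^ 2 + Δt * (u - y') ^ 2 + Δt * (1 - 2 * Δt) * y' ^ 2 := by
    subst hy'; ring
  rw [← sub_nonneg, key]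
  exact add_nonneg (add_nonneg (sq_nonneg _) (mul_nonneg h0 (sq_nonneg _)))
    (mul_nonneg (mul_nonneg h0 (by linarith)) (sq_nonneg _))

theorem List.foldl_le_add_length_mul {α γ : Type*} (E : α → ℝ) (f : α → γ → α) (c : ℝ)
    (hf : ∀ p n, E (f p n) ≤ E p + c) (l : List γ) (p : α) :
    E (l.foldl f p) ≤ E p + l.length * c := by
  induction l generalizing p with
  | nil => simp
  | cons n l ih =>
    simp only [List.foldl_cons, List.length_cons, Nat.cast_succ]
    linarith [ih (f p n), hf p n]

section GraphCON

variable {v : ℕ} (G : SimpleGraph (Fin v)) [DecidableRel G.Adj] (d : Fin v → ℝ) (σ : ℝ → ℝ)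
  {Δt : ℝ} {β : ℝ}

theorem gcnStep_energy_le (hΔt : 0 ≤ Δt) (hΔt2 : Δt ≤ 1 / 2) (hβ : ∀ x, |σ x| ≤ β)
    (wn : Fin v → ℝ) (p : (Fin v → ℝ) × (Fin v → ℝ)) (i : Fin v) :
    (gcnStep G d σ Δt wn p).1 i ^ 2 + (gcnStep G d σ Δt wn p).2 i ^ 2
      ≤ p.1 i ^ 2 + p.2 i ^ 2 + Δt * β ^ 2 := by
  set u := σ (wn i / d i * p.1 i + ∑ j ∈ G.neighborFinset i, wn j * p.1 j / √(d i * d j))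
  have hu : u ^ 2 ≤ β ^ 2 := sq_abs u ▸ pow_le_pow_left₀ (abs_nonneg u) (hβ _) 2
  calc _ ≤ p.1 i ^ 2 + p.2 i ^ 2 + Δt * u ^ 2 := graphCON_energy_le hΔt hΔt2 rfl
    _ ≤ _ := by gcongr

theorem gcnForward_energy_le {N : ℕ} (hΔt : 0 ≤ Δt) (hΔt2 : Δt ≤ 1 / 2) (hβ : ∀ x, |σ x| ≤ β)
    (W : Fin N → Fin v → ℝ) (Z0 : (Fin v → ℝ) × (Fin v → ℝ)) (i : Fin v) :
    (gcnForward G d σ Δt W Z0).1 i ^ 2 + (gcnForward G d σ Δt W Z0).2 i ^ 2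
      ≤ Z0.1 i ^ 2 + Z0.2 i ^ 2 + N * (Δt * β ^ 2) := by
  simpa [gcnForward] using List.foldl_le_add_length_mul (fun p => p.1 i ^ 2 + p.2 i ^ 2) _ _
    (fun p n => gcnStep_energy_le G d σ hΔt hΔt2 hβ (W n) p i) (List.finRange N) Z0

end GraphCON

theorem abs_le_of_sq_add_sq_le {x y a b β T : ℝ} (hβ : 0 ≤ β) (hT : 0 ≤ T)
    (h : x ^ 2 + y ^ 2 ≤ a ^ 2 + b ^ 2 + β ^ 2 * T) : |x| ≤ |a| + |b| + β * √T := by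
  apply abs_le_of_sq_le_sq _ (by positivity)
  have hsq : √T ^ 2 = T := Real.sq_sqrt hT
  nlinarith [sq_nonneg y, sq_abs a, sq_abs b, mul_nonneg (abs_nonneg a) (abs_nonneg b),
    mul_nonneg (mul_nonneg (abs_nonneg a) hβ) (Real.sqrt_nonneg T),
    mul_nonneg (mul_nonneg (abs_nonneg b) hβ) (Real.sqrt_nonneg T)]

theorem hasFDerivAt_sum_sq_sub {ι : Type*} [Fintype ι] (a x : ι → ℝ) :
    HasFDerivAt (fun y : ι → ℝ => ∑ i, (y i - a i) ^ 2)
      (∑ i, (2 * (x i - a i)) • ContinuousLinearMap.proj (R := ℝ) (φ := fun _ => ℝ) i) x := by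
  refine HasFDerivAt.fun_sum fun i _ => ?_
  simpa using ((hasFDerivAt_apply i x).sub_const (a i)).pow 2

theorem hasFDerivAt_const_mul_sum_sq_sub_fst {ι : Type*} [Fintype ι] (c : ℝ) (a : ι → ℝ)
    (Z : (ι → ℝ) × (ι → ℝ)) :
    HasFDerivAt (fun Z : (ι → ℝ) × (ι → ℝ) => c * ∑ i, (Z.1 i - a i) ^ 2)
      (c • (∑ i, (2 * (Z.1 i - a i)) • ContinuousLinearMap.proj (R := ℝ) (φ := fun _ => ℝ) i).comp
        (ContinuousLinearMap.fst ℝ _ _)) Z :=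
  ((hasFDerivAt_sum_sq_sub a Z.1).comp Z hasFDerivAt_fst).const_mul c

theorem stmt_15_general {v N : ℕ} (G : SimpleGraph (Fin v)) [DecidableRel G.Adj]
    (d : Fin v → ℝ)
    (Δt : ℝ) (hΔt : 0 < Δt) (hΔt2 : Δt ≤ 1 / 2)
    (σ : ℝ → ℝ)
    (β : ℝ) (hβ : ∀ x : ℝ, |σ x| ≤ β)
    (W : Fin N → Fin v → ℝ) (X0 Y0 Xbar : Fin v → ℝ) :
    let ZN : (Fin v → ℝ) × (Fin v → ℝ) := gcnForward G d σ Δt W (X0, Y0)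
    let Jf : (Fin v → ℝ) × (Fin v → ℝ) → ℝ :=
      fun Z => (1 / (2 * (v : ℝ))) * ∑ i : Fin v, (Z.1 i - Xbar i) ^ 2
    let B : ℝ := (1 / (v : ℝ)) * ((⨆ i : Fin v, (|X0 i| + |Y0 i|))
      + (⨆ i : Fin v, |Xbar i|) + β * Real.sqrt ((N : ℝ) * Δt))
    DifferentiableAt ℝ Jf ZN ∧
      ∀ i : Fin v,
        |fderiv ℝ Jf ZN (Pi.single i 1, 0)| ≤ B ∧
        |fderiv ℝ Jf ZN (0, Pi.single i 1)| ≤ B := by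
  intro ZN Jf B
  have hJ := hasFDerivAt_const_mul_sum_sq_sub_fst (1 / (2 * (v : ℝ))) Xbar ZN
  refine ⟨hJ.differentiableAt, fun i => ?_⟩
  have hZN : |ZN.1 i| ≤ |X0 i| + |Y0 i| + β * √(N * Δt) := by
    refine abs_le_of_sq_add_sq_le (y := ZN.2 i) ((abs_nonneg _).trans (hβ 0)) (by positivity) ?_
    linarith [gcnForward_energy_le G d σ hΔt.le hΔt2 hβ W (X0, Y0) i]
  have hB : 1 / v * |ZN.1 i - Xbar i| ≤ B := by
    have hX0 := le_ciSup (Set.finite_range fun j => |X0 j| + |Y0 j|).bddAbove i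
    have hXbar := le_ciSup (Set.finite_range fun j => |Xbar j|).bddAbove i
    have htri := abs_sub (ZN.1 i) (Xbar i)
    unfold B
    gcongr
    linarith
  rw [hJ.fderiv]
  constructor
  · convert hB using 1
    simp only [one_div, mul_inv_rev, smul_apply, ContinuousLinearMap.comp_apply,
      ContinuousLinearMap.coe_fst', sum_apply, ContinuousLinearMap.proj_apply, Pi.single_apply,
      smul_eq_mul, mul_ite, mul_one, mul_zero, Finset.sum_ite_eq', Finset.mem_univ, ↓reduceIte,
      abs_mul, abs_inv, Nat.abs_cast, Nat.abs_ofNat]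
    ring
  · simpa using (by positivity : 0 ≤ 1 / (v : ℝ) * |ZN.1 i - Xbar i|).trans hB

/-- **Bound on the partial derivatives of the loss with respect to the final state.** Let
`J(Z^N) = (1/2v) ∑_i (X^N_i − X̄_i)²` be the loss as a function of the final concatenated
state `Z^N` generated by the GraphCON-GCN recursion with `Δt ≤ 1/2`. Then `J` is
differentiable at `Z^N` and every partial derivative of `J` with respect to an entry of
`Z^N` is bounded in absolute value by
`(1/v)(max_i(|X⁰_i| + |Y⁰_i|) + max_i |X̄_i| + β√(NΔt))`. -/
theorem stmt_15 {v N : ℕ} (hv : 0 < v) (G : SimpleGraph (Fin v)) [DecidableRel G.Adj]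
    (d : Fin v → ℝ) (hd : ∀ i : Fin v, 1 ≤ d i)
    (Δt : ℝ) (hΔt : 0 < Δt) (hΔt2 : Δt ≤ 1 / 2)
    (σ : ℝ → ℝ) (hσdiff : Differentiable ℝ σ)
    (β β' : ℝ) (hβ : ∀ x : ℝ, |σ x| ≤ β) (hβ' : ∀ x : ℝ, |deriv σ x| ≤ β')
    (W : Fin N → Fin v → ℝ) (X0 Y0 Xbar : Fin v → ℝ) :
    let ZN : (Fin v → ℝ) × (Fin v → ℝ) := gcnForward G d σ Δt W (X0, Y0)
    let Jf : (Fin v → ℝ) × (Fin v → ℝ) → ℝ :=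
      fun Z => (1 / (2 * (v : ℝ))) * ∑ i : Fin v, (Z.1 i - Xbar i) ^ 2
    let B : ℝ := (1 / (v : ℝ)) * ((⨆ i : Fin v, (|X0 i| + |Y0 i|))
      + (⨆ i : Fin v, |Xbar i|) + β * Real.sqrt ((N : ℝ) * Δt))
    DifferentiableAt ℝ Jf ZN ∧
      ∀ i : Fin v,
        |fderiv ℝ Jf ZN (Pi.single i 1, 0)| ≤ B ∧
        |fderiv ℝ Jf ZN (0, Pi.single i 1)| ≤ B :=
  stmt_15_general G d Δt hΔt hΔt2 σ β hβ W X0 Y0 Xbar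
end

section
/- (Upper bound on gradients of deep GraphCON-GCN.) Assume Δt ≤ 1/2 and N Γ Δt ≤ 1. Let the node features Xⁿ, Yⁿ be generated by the GraphCON-GCN recursion for n = 1,…,N from initial data X⁰, Y⁰ ∈ ℝ^v, and let J = (1/2v) Σ_{i=1}^v (X^N_i − X̄_i)² be the loss for a fixed target X̄ ∈ ℝ^v, regarded as a differentiable function of all weight entries. Then for every layer 1 ≤ ℓ ≤ N and every node 1 ≤ k ≤ v, the partial derivative of J with respect to the weight entry w^ℓ_k satisfies |∂J/∂w^ℓ_k| ≤ β' D̂ Δt (1 + N Γ Δt) (max_{1≤i≤v}(|X⁰_i| + |Y⁰_i|) + max_{1≤i≤v}|X̄_i| + β √(NΔt))². In particular the gradient is bounded independently of the number of layers N whenever Δt ∼ N^{−1}. -/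
/-!
Node by node, `(Xⁿᵢ, Yⁿᵢ)` performs a damped-oscillator step whose linear part is a contraction
for `Δt ≤ 1/2` and whose forcing `Δt σ(C)` has size at most `Δt β`. Hence `√(X² + Y²)` grows by at
most `(3/2) Δt β` per layer, and since `NΔt ≤ 1/6` every `|Xⁿᵢ|` stays below
`R = max(|X⁰| + |Y⁰|) + β √(NΔt)`.

Differentiating in one weight `w^ℓ_k`, the derivative of the state obeys the same oscillator step,
now forced by `σ'(C) ∂C` with `|∂C| ≤ D̂ (‖∂w‖₁ R + ‖w‖₁ ‖∂Z‖)`. Its sup norm thus grows by at most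
the factor `1 + Δt (1 + β' D̂ ‖w‖₁)` per layer, with a single source `Δt β' D̂ R` at layer `ℓ`, and
`NΓΔt ≤ 1` turns the `N`-th power of that factor into `1 + NΓΔt`. The loss contributes the factor
`max |X^N − X̄| ≤ R + max |X̄|`.
-/

open Finset

theorem sqrt_sq_add_sq_add_le (a b c e : ℝ) :
    √((a + b) ^ 2 + (c + e) ^ 2) ≤ √(a ^ 2 + c ^ 2) + √(b ^ 2 + e ^ 2) := by
  simpa only [← Complex.norm_add_mul_I, Complex.ofReal_add, add_mul, add_add_add_comm]
    using norm_add_le ((a : ℂ) + c * Complex.I) (b + e * Complex.I)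

theorem sqrt_oscillatorStep_le {h : ℝ} (h₀ : 0 ≤ h) (h₁ : h ≤ 1 / 2) (x y u : ℝ) :
    √((x + h * ((1 - h) * y + h * u - h * x)) ^ 2 + ((1 - h) * y + h * u - h * x) ^ 2)
      ≤ √(x ^ 2 + y ^ 2) + 3 / 2 * h * |u| := by
  -- The new state is `A (x, y) + h u (h, 1)` with `A` linear, and
  -- `x² + y² - ‖A (x, y)‖² = h³(1-h)(x+y)² + h²(1-h)x² + h(2-2h+h²)y²`.
  have hfree : √(((1 - h ^ 2) * x + h * (1 - h) * y) ^ 2 + ((1 - h) * y - h * x) ^ 2)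
      ≤ √(x ^ 2 + y ^ 2) := by
    refine Real.sqrt_le_sqrt ?_
    have hh : 0 ≤ 1 - h := by linarith
    linarith [mul_nonneg (mul_nonneg (pow_nonneg h₀ 3) hh) (sq_nonneg (x + y)),
      mul_nonneg (mul_nonneg (sq_nonneg h) hh) (sq_nonneg x),
      mul_nonneg (mul_nonneg h₀ (by nlinarith : 0 ≤ 2 - 2 * h + h ^ 2)) (sq_nonneg y)]
  have hforce : √((h ^ 2 * u) ^ 2 + (h * u) ^ 2) ≤ 3 / 2 * h * |u| := by
    rw [Real.sqrt_le_left (by positivity)]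
    nlinarith [sq_abs u,
      mul_nonneg (mul_nonneg (sq_nonneg h) (sq_nonneg u)) (by nlinarith : 0 ≤ 5 / 4 - h ^ 2)]
  calc _ = √((((1 - h ^ 2) * x + h * (1 - h) * y) + h ^ 2 * u) ^ 2
          + (((1 - h) * y - h * x) + h * u) ^ 2) := by ring_nf
    _ ≤ _ := (sqrt_sq_add_sq_add_le _ _ _ _).trans (add_le_add hfree hforce)

theorem abs_oscillatorStep_le {h : ℝ} (h₀ : 0 ≤ h) (h₁ : h ≤ 1) {x y u m b : ℝ}
    (hx : |x| ≤ m) (hy : |y| ≤ m) (hu : |u| ≤ b) :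
    |x + h * ((1 - h) * y + h * u - h * x)| ≤ (1 + h) * m + h * b ∧
      |(1 - h) * y + h * u - h * x| ≤ (1 + h) * m + h * b := by
  have hm : 0 ≤ m := (abs_nonneg _).trans hx
  have hb : 0 ≤ b := (abs_nonneg _).trans hu
  have hY : |(1 - h) * y + h * u - h * x| ≤ m + h * b := by
    calc _ ≤ |(1 - h) * y| + |h * u| + |h * x| :=
          (abs_sub _ _).trans (add_le_add (abs_add_le _ _) le_rfl)
      _ = (1 - h) * |y| + h * |u| + h * |x| := by
        rw [abs_mul, abs_mul, abs_mul, abs_of_nonneg h₀, abs_of_nonneg (by linarith)]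
      _ ≤ m + h * b := by nlinarith
  constructor
  · calc _ ≤ |x| + h * |(1 - h) * y + h * u - h * x| :=
          (abs_add_le _ _).trans_eq (by rw [abs_mul, abs_of_nonneg h₀])
      _ ≤ _ := by
          nlinarith [mul_le_mul_of_nonneg_left hY h₀,
            mul_le_mul_of_nonneg_right h₁ (mul_nonneg h₀ hb)]
  · nlinarith

theorem one_add_pow_le_one_add_two_mul {x : ℝ} (hx : 0 ≤ x) {N : ℕ} (hN : N * x ≤ 1 / 2) :
    (1 + x) ^ N ≤ 1 + 2 * (N * x) := by
  have hNx : 0 ≤ N * x := by positivity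
  calc (1 + x) ^ N ≤ Real.exp x ^ N := by gcongr; linarith [Real.add_one_le_exp x]
    _ = Real.exp (N * x) := (Real.exp_nat_mul x N).symm
    _ ≤ 1 / (1 - N * x) := Real.exp_bound_div_one_sub_of_interval hNx (by linarith)
    _ ≤ 1 + 2 * (N * x) := by
      rw [div_le_iff₀ (by linarith)]; nlinarith

theorem hasDerivAt_update_update {𝕜 ι κ : Type*} [NontriviallyNormedField 𝕜] [DecidableEq ι]
    [DecidableEq κ] [Fintype ι] [Fintype κ] (W : ι → κ → 𝕜) (ℓ : ι) (k : κ) (a : 𝕜) :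
    HasDerivAt (fun a => Function.update W ℓ (Function.update (W ℓ) k a))
      (Pi.single ℓ (Pi.single k 1)) a := by
  refine ((hasFDerivAt_update W (Function.update (W ℓ) k a)).comp_hasDerivAt a
    (hasDerivAt_update (W ℓ) k a)).congr_deriv ?_
  ext n j
  by_cases h : n = ℓ
  · subst h; simp
  · simp [h]

theorem exists_hasDerivAt_meanSqLoss_le {v : ℕ} [NeZero v] {x : ℝ → Fin v → ℝ}
    {x' : Fin v → ℝ} {a : ℝ} (hx : HasDerivAt x x' a) (xbar : Fin v → ℝ) {R Xb : ℝ}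
    (hR : ∀ i, |x a i| ≤ R) (hXb : ∀ i, |xbar i| ≤ Xb) :
    ∃ Dg, HasDerivAt (fun a => 1 / (2 * (v : ℝ)) * ∑ i, (x a i - xbar i) ^ 2) Dg a ∧
      |Dg| ≤ (R + Xb) * ‖x'‖ := by
  refine ⟨_, (HasDerivAt.fun_sum fun i _ =>
    ((hasDerivAt_pi.1 hx i).sub_const (xbar i)).pow 2).const_mul (1 / (2 * (v : ℝ))), ?_⟩
  have hterm : ∀ i, |((2 : ℕ) : ℝ) * (x a i - xbar i) ^ (2 - 1) * x' i| ≤ 2 * ((R + Xb) * ‖x'‖) :=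
    fun i => by
      have he : |x a i - xbar i| ≤ R + Xb := (abs_sub _ _).trans (add_le_add (hR i) (hXb i))
      rw [pow_one, abs_mul, abs_mul, Nat.cast_ofNat, abs_two, mul_assoc]
      exact mul_le_mul_of_nonneg_left
        (mul_le_mul he (norm_le_pi_norm x' i) (abs_nonneg _) ((abs_nonneg _).trans he)) zero_le_two
  have hv : (0 : ℝ) < v := Nat.cast_pos.2 (NeZero.pos v)
  rw [abs_mul, abs_of_pos (by positivity)]
  calc _ ≤ 1 / (2 * (v : ℝ)) * ∑ _i : Fin v, 2 * ((R + Xb) * ‖x'‖) := by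
        gcongr; exact (abs_sum_le_sum_abs _ _).trans (sum_le_sum fun i _ => hterm i)
    _ = (R + Xb) * ‖x'‖ := by
        rw [sum_const, card_univ, Fintype.card_fin, nsmul_eq_mul]; field_simp

theorem three_halves_mul_le_sqrt {T : ℝ} (h₀ : 0 ≤ T) (h₁ : T ≤ 4 / 9) : 3 / 2 * T ≤ √T := by
  rw [Real.le_sqrt (by positivity) h₀]; nlinarith

theorem sum_abs_single_single {ι κ : Type*} [DecidableEq ι] [DecidableEq κ] [Fintype ι]
    [Fintype κ] (ℓ : ι) (k : κ) :
    ∑ n, ∑ j, |(Pi.single ℓ (Pi.single k 1) : ι → κ → ℝ) n j| = 1 := by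
  rw [Fintype.sum_eq_single ℓ fun n hn => by simp [hn],
    Fintype.sum_eq_single k fun j hj => by simp [hj]]
  simp

theorem gcnForward_succ {v N : ℕ} (G : SimpleGraph (Fin v)) [DecidableRel G.Adj]
    (d : Fin v → ℝ) (σ : ℝ → ℝ) (Δt : ℝ) (W : Fin (N + 1) → Fin v → ℝ)
    (Z0 : (Fin v → ℝ) × (Fin v → ℝ)) :
    gcnForward G d σ Δt W Z0
      = gcnStep G d σ Δt (W (Fin.last N)) (gcnForward G d σ Δt (fun n => W n.castSucc) Z0) := by
  simp only [gcnForward, ← Fin.foldl_eq_foldl_finRange, Fin.foldl_succ_last]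

section GCN

variable {v : ℕ} (G : SimpleGraph (Fin v)) [DecidableRel G.Adj] (d : Fin v → ℝ)

noncomputable def gcnAggregate (w x : Fin v → ℝ) (i : Fin v) : ℝ :=
  w i / d i * x i + ∑ j ∈ G.neighborFinset i, w j * x j / √(d i * d j)

variable {σ : ℝ → ℝ} {Δt : ℝ}

theorem gcnStep_snd_apply (w : Fin v → ℝ) (p : (Fin v → ℝ) × (Fin v → ℝ)) (i : Fin v) :
    (gcnStep G d σ Δt w p).2 i
      = (1 - Δt) * p.2 i + Δt * σ (gcnAggregate G d w p.1 i) - Δt * p.1 i := rfl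

theorem gcnStep_fst_apply (w : Fin v → ℝ) (p : (Fin v → ℝ) × (Fin v → ℝ)) (i : Fin v) :
    (gcnStep G d σ Δt w p).1 i = p.1 i + Δt * (gcnStep G d σ Δt w p).2 i := rfl

theorem sqrt_gcnStep_le {β : ℝ} (hβ : ∀ x, |σ x| ≤ β) (h₀ : 0 ≤ Δt) (h₁ : Δt ≤ 1 / 2)
    (w : Fin v → ℝ) (p : (Fin v → ℝ) × (Fin v → ℝ)) (i : Fin v) :
    √((gcnStep G d σ Δt w p).1 i ^ 2 + (gcnStep G d σ Δt w p).2 i ^ 2)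
      ≤ √(p.1 i ^ 2 + p.2 i ^ 2) + 3 / 2 * Δt * β := by
  rw [gcnStep_fst_apply, gcnStep_snd_apply]
  exact (sqrt_oscillatorStep_le h₀ h₁ _ _ _).trans (by gcongr; exact hβ _)

theorem sqrt_gcnForward_le {β : ℝ} (hβ : ∀ x, |σ x| ≤ β) (h₀ : 0 ≤ Δt) (h₁ : Δt ≤ 1 / 2)
    {N : ℕ} (W : Fin N → Fin v → ℝ) (Z0 : (Fin v → ℝ) × (Fin v → ℝ)) (i : Fin v) :
    √((gcnForward G d σ Δt W Z0).1 i ^ 2 + (gcnForward G d σ Δt W Z0).2 i ^ 2)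
      ≤ √(Z0.1 i ^ 2 + Z0.2 i ^ 2) + 3 / 2 * N * Δt * β := by
  induction N with
  | zero => simp [gcnForward]
  | succ N ih =>
    rw [gcnForward_succ]
    refine (sqrt_gcnStep_le G d hβ h₀ h₁ _ _ i).trans ?_
    push_cast
    linarith [ih (fun n => W n.castSucc)]

theorem abs_gcnForward_fst_le {β : ℝ} (hβ : ∀ x, |σ x| ≤ β) (h₀ : 0 ≤ Δt) (h₁ : Δt ≤ 1 / 2)
    {N : ℕ} (W : Fin N → Fin v → ℝ) (Z0 : (Fin v → ℝ) × (Fin v → ℝ)) (i : Fin v) :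
    |(gcnForward G d σ Δt W Z0).1 i| ≤ |Z0.1 i| + |Z0.2 i| + 3 / 2 * N * Δt * β := by
  have hsqrt : √(Z0.1 i ^ 2 + Z0.2 i ^ 2) ≤ |Z0.1 i| + |Z0.2 i| :=
    (Real.sqrt_le_left (by positivity)).2 <| by
      nlinarith [sq_abs (Z0.1 i), sq_abs (Z0.2 i), abs_nonneg (Z0.1 i), abs_nonneg (Z0.2 i)]
  calc _ ≤ √((gcnForward G d σ Δt W Z0).1 i ^ 2 + (gcnForward G d σ Δt W Z0).2 i ^ 2) :=
        Real.abs_le_sqrt (le_add_of_nonneg_right (sq_nonneg _))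
    _ ≤ _ := (sqrt_gcnForward_le G d hβ h₀ h₁ W Z0 i).trans (by gcongr)

theorem abs_gcnAggregate_le {D : ℝ} (hD : ∀ i j, 1 / √(d i * d j) ≤ D) (w : Fin v → ℝ)
    {x : Fin v → ℝ} {M : ℝ} (hx : ∀ j, |x j| ≤ M) (i : Fin v) :
    |gcnAggregate G d w x i| ≤ D * (∑ j, |w j|) * M := by
  have hD₀ : 0 ≤ D := (one_div_nonneg.2 (Real.sqrt_nonneg _)).trans (hD i i)
  have hM₀ : 0 ≤ M := (abs_nonneg _).trans (hx i)
  have hterm : ∀ j, |w j * x j / √(d i * d j)| ≤ |w j| * (D * M) := fun j => by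
    rw [abs_div, abs_mul, abs_of_nonneg (Real.sqrt_nonneg _), mul_div_assoc, div_eq_mul_one_div]
    refine mul_le_mul_of_nonneg_left ?_ (abs_nonneg _)
    rw [mul_comm D]
    exact mul_le_mul (hx j) (hD i j) (one_div_nonneg.2 (Real.sqrt_nonneg _)) hM₀
  have hself : |w i / d i * x i| = |w i * x i / √(d i * d i)| := by
    simp only [Real.sqrt_mul_self_eq_abs, abs_mul, abs_div, abs_abs]; ring
  calc |gcnAggregate G d w x i|
      ≤ |w i / d i * x i| + ∑ j ∈ G.neighborFinset i, |w j * x j / √(d i * d j)| :=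
        (abs_add_le _ _).trans (add_le_add le_rfl (abs_sum_le_sum_abs _ _))
    _ ≤ ∑ j ∈ insert i (G.neighborFinset i), |w j| * (D * M) := by
        rw [sum_insert (G.notMem_neighborFinset_self i), hself]
        exact add_le_add (hterm i) (sum_le_sum fun j _ => hterm j)
    _ ≤ ∑ j, |w j| * (D * M) :=
        sum_le_sum_of_subset_of_nonneg (subset_univ _) fun j _ _ => by positivity
    _ = D * (∑ j, |w j|) * M := by rw [← sum_mul]; ring

theorem HasDerivAt.gcnAggregate {w x : ℝ → Fin v → ℝ} {w' x' : Fin v → ℝ} {a : ℝ}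
    (hw : HasDerivAt w w' a) (hx : HasDerivAt x x' a) (i : Fin v) :
    HasDerivAt (fun a => gcnAggregate G d (w a) (x a) i)
      (gcnAggregate G d w' (x a) i + gcnAggregate G d (w a) x' i) a := by
  have hw' := hasDerivAt_pi.1 hw
  have hx' := hasDerivAt_pi.1 hx
  have hsum : HasDerivAt (fun a => ∑ j ∈ G.neighborFinset i, w a j * x a j / √(d i * d j))
      (∑ j ∈ G.neighborFinset i, (w' j * x a j + w a j * x' j) / √(d i * d j)) a :=
    HasDerivAt.fun_sum fun j _ => ((hw' j).mul (hx' j)).div_const _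
  refine ((((hw' i).div_const (d i)).mul (hx' i)).add hsum).congr_deriv ?_
  simp only [_root_.gcnAggregate, sum_add_distrib, add_div]
  ring

theorem exists_hasDerivAt_gcnStep_le [NeZero v] (hσ : Differentiable ℝ σ) {β' : ℝ}
    (hβ' : ∀ x, |deriv σ x| ≤ β') (h₀ : 0 ≤ Δt) (h₁ : Δt ≤ 1) {D : ℝ}
    (hD : ∀ i j, 1 / √(d i * d j) ≤ D) {w : ℝ → Fin v → ℝ} {w' : Fin v → ℝ}
    {p : ℝ → (Fin v → ℝ) × (Fin v → ℝ)} {p' : (Fin v → ℝ) × (Fin v → ℝ)} {a Ws R : ℝ}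
    (hw : HasDerivAt w w' a) (hp : HasDerivAt p p' a)
    (hWs : ∑ j, |w a j| ≤ Ws) (hR : ∀ j, |(p a).1 j| ≤ R) :
    ∃ q', HasDerivAt (fun a => gcnStep G d σ Δt (w a) (p a)) q' a ∧
      ‖q'‖ ≤ (1 + Δt * (1 + β' * D * Ws)) * ‖p'‖ + Δt * β' * D * R * ∑ j, |w' j| := by
  have hX : HasDerivAt (fun a => (p a).1) p'.1 a :=
    hasFDerivAt_fst.comp_hasDerivAt (f := p) a hp
  have hY : HasDerivAt (fun a => (p a).2) p'.2 a :=
    hasFDerivAt_snd.comp_hasDerivAt (f := p) a hp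
  have hβ'₀ : 0 ≤ β' := (abs_nonneg _).trans (hβ' 0)
  have hD₀ : 0 ≤ D := (one_div_nonneg.2 (Real.sqrt_nonneg _)).trans (hD 0 0)
  set m := ‖p'‖
  have hm₁ : ∀ j, |p'.1 j| ≤ m := fun j => (norm_le_pi_norm p'.1 j).trans (norm_fst_le p')
  have hm₂ : ∀ j, |p'.2 j| ≤ m := fun j => (norm_le_pi_norm p'.2 j).trans (norm_snd_le p')
  set C := fun i => gcnAggregate G d (w a) (p a).1 i
  set C' := fun i => gcnAggregate G d w' (p a).1 i + gcnAggregate G d (w a) p'.1 i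
  have hC' : ∀ i, |C' i| ≤ D * ((∑ j, |w' j|) * R + Ws * m) := fun i => by
    have h₁ := abs_gcnAggregate_le G d hD w' hR i
    have h₂ := abs_gcnAggregate_le G d hD (w a) hm₁ i
    have h₃ : D * (∑ j, |w a j|) * m ≤ D * Ws * m := by gcongr
    show |gcnAggregate G d w' (p a).1 i + gcnAggregate G d (w a) p'.1 i| ≤ _
    linarith [abs_add_le (gcnAggregate G d w' (p a).1 i) (gcnAggregate G d (w a) p'.1 i)]
  set Y' := fun i => (1 - Δt) * p'.2 i + Δt * (deriv σ (C i) * C' i) - Δt * p'.1 i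
  have hYstep : HasDerivAt (fun a => (gcnStep G d σ Δt (w a) (p a)).2) Y' a :=
    hasDerivAt_pi.2 fun i => by
      simp only [gcnStep_snd_apply]
      exact (((hasDerivAt_pi.1 hY i).const_mul _).add
        (((hσ _).hasDerivAt.comp a (hw.gcnAggregate G d hX i)).const_mul Δt)).sub
        ((hasDerivAt_pi.1 hX i).const_mul Δt)
  have hXstep : HasDerivAt (fun a => (gcnStep G d σ Δt (w a) (p a)).1)
      (fun i => p'.1 i + Δt * Y' i) a :=
    hasDerivAt_pi.2 fun i => by
      simp only [gcnStep_fst_apply]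
      exact (hasDerivAt_pi.1 hX i).add ((hasDerivAt_pi.1 hYstep i).const_mul Δt)
  refine ⟨_, hXstep.prodMk hYstep, ?_⟩
  -- The derivative performs the same oscillator step, forced by `σ'(C) ∂C`.
  have hb : ∀ i, |p'.1 i + Δt * Y' i| ≤ (1 + Δt * (1 + β' * D * Ws)) * m
      + Δt * β' * D * R * ∑ j, |w' j| ∧ |Y' i| ≤ (1 + Δt * (1 + β' * D * Ws)) * m
      + Δt * β' * D * R * ∑ j, |w' j| := fun i => by
    have hu : |deriv σ (C i) * C' i| ≤ β' * (D * ((∑ j, |w' j|) * R + Ws * m)) := by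
      rw [abs_mul]; exact mul_le_mul (hβ' _) (hC' i) (abs_nonneg _) hβ'₀
    convert abs_oscillatorStep_le h₀ h₁ (hm₁ i) (hm₂ i) hu using 2 <;> ring
  have hb₀ := (abs_nonneg _).trans (hb 0).2
  exact norm_prod_le_iff.2 ⟨(pi_norm_le_iff_of_nonneg hb₀).2 fun i => (hb i).1,
    (pi_norm_le_iff_of_nonneg hb₀).2 fun i => (hb i).2⟩

theorem exists_hasDerivAt_gcnForward_le [NeZero v] (hσ : Differentiable ℝ σ) {β β' : ℝ}
    (hβ : ∀ x, |σ x| ≤ β) (hβ' : ∀ x, |deriv σ x| ≤ β') (h₀ : 0 ≤ Δt) (h₁ : Δt ≤ 1 / 2)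
    {D : ℝ} (hD : ∀ i j, 1 / √(d i * d j) ≤ D) {N : ℕ} {W : ℝ → Fin N → Fin v → ℝ}
    {W' : Fin N → Fin v → ℝ} {a Ws R : ℝ} (hW : HasDerivAt W W' a)
    (hWs : ∀ n, ∑ j, |W a n j| ≤ Ws) (Z0 : (Fin v → ℝ) × (Fin v → ℝ))
    (hR : ∀ j, |Z0.1 j| + |Z0.2 j| + 3 / 2 * N * Δt * β ≤ R) :
    ∃ q', HasDerivAt (fun a => gcnForward G d σ Δt (W a) Z0) q' a ∧
      ‖q'‖ ≤ (1 + Δt * (1 + β' * D * Ws)) ^ N * (Δt * β' * D * R * ∑ n, ∑ j, |W' n j|) := by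
  induction N with
  | zero => exact ⟨0, by simpa [gcnForward] using hasDerivAt_const a Z0, by simp⟩
  | succ N ih =>
    have hβ₀ : 0 ≤ β := (abs_nonneg _).trans (hβ 0)
    have hR' : ∀ j, |Z0.1 j| + |Z0.2 j| + 3 / 2 * N * Δt * β ≤ R := fun j =>
      (hR j).trans' (by gcongr; linarith)
    obtain ⟨q, hq, hqle⟩ := ih (W := fun a n => W a n.castSucc) (W' := fun n => W' n.castSucc)
      (hasDerivAt_pi.2 fun n => hasDerivAt_pi.1 hW n.castSucc) (fun n => hWs _) hR'
    obtain ⟨q', hq', hq'le⟩ := exists_hasDerivAt_gcnStep_le G d hσ hβ' h₀ (by linarith) hD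
      (hasDerivAt_pi.1 hW (Fin.last N)) hq (hWs _)
      (fun j => (abs_gcnForward_fst_le G d hβ h₀ h₁ _ _ j).trans (hR' j))
    simp only [gcnForward_succ]
    refine ⟨q', hq', hq'le.trans ?_⟩
    have hβ'₀ : 0 ≤ β' := (abs_nonneg _).trans (hβ' 0)
    have hD₀ : 0 ≤ D := (one_div_nonneg.2 (Real.sqrt_nonneg _)).trans (hD 0 0)
    have hR₀ : 0 ≤ R := le_trans (by positivity) (hR' 0)
    have hWs₀ : 0 ≤ Ws := (sum_nonneg fun j _ => abs_nonneg _).trans (hWs (Fin.last N))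
    have hq₁ : 1 ≤ 1 + Δt * (1 + β' * D * Ws) := le_add_of_nonneg_right (by positivity)
    have hlast : Δt * β' * D * R * ∑ j, |W' (Fin.last N) j|
        ≤ (1 + Δt * (1 + β' * D * Ws)) ^ N * (1 + Δt * (1 + β' * D * Ws))
          * (Δt * β' * D * R * ∑ j, |W' (Fin.last N) j|) :=
      le_mul_of_one_le_left (by positivity) (one_le_pow₀ hq₁ |>.trans_eq (pow_succ _ _))
    rw [Fin.sum_univ_castSucc, pow_succ]
    nlinarith [mul_le_mul_of_nonneg_left hqle (zero_le_one.trans hq₁)]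

theorem exists_hasDerivAt_gcnLoss_le [NeZero v] (hσ : Differentiable ℝ σ) {β β' : ℝ}
    (hβ : ∀ x, |σ x| ≤ β) (hβ' : ∀ x, |deriv σ x| ≤ β') (h₀ : 0 ≤ Δt) (h₁ : Δt ≤ 1 / 2)
    {D : ℝ} (hD : ∀ i j, 1 / √(d i * d j) ≤ D) {N : ℕ} (W : Fin N → Fin v → ℝ) {Ws Γ : ℝ}
    (hWs : ∀ n, ∑ j, |W n j| ≤ Ws) (hΓ : 2 * (1 + β' * D * Ws) ≤ Γ) (hNΓ : N * Γ * Δt ≤ 1)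
    (Z0 : (Fin v → ℝ) × (Fin v → ℝ)) {R : ℝ}
    (hR : ∀ j, |Z0.1 j| + |Z0.2 j| + 3 / 2 * N * Δt * β ≤ R)
    (xbar : Fin v → ℝ) {Xb : ℝ} (hXb : ∀ i, |xbar i| ≤ Xb) (ℓ : Fin N) (k : Fin v) :
    ∃ Dg, HasDerivAt (fun a => 1 / (2 * (v : ℝ)) * ∑ i,
        ((gcnForward G d σ Δt (Function.update W ℓ (Function.update (W ℓ) k a)) Z0).1 i
          - xbar i) ^ 2) Dg (W ℓ k) ∧
      |Dg| ≤ β' * D * Δt * (1 + N * Γ * Δt) * (R + Xb) ^ 2 := by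
  obtain ⟨q, hq, hqle⟩ := exists_hasDerivAt_gcnForward_le G d hσ hβ hβ' h₀ h₁ hD
    (hasDerivAt_update_update W ℓ k (W ℓ k)) (by simpa using hWs) Z0 hR
  obtain ⟨Dg, hDg, hDgle⟩ := exists_hasDerivAt_meanSqLoss_le
    (hasFDerivAt_fst.comp_hasDerivAt (f := _) _ hq : HasDerivAt _ q.1 _) xbar
    (fun i => (abs_gcnForward_fst_le G d hβ h₀ h₁ _ _ i).trans (hR i)) hXb
  refine ⟨Dg, hDg, hDgle.trans ?_⟩
  rw [sum_abs_single_single, mul_one] at hqle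
  have hβ₀ : 0 ≤ β := (abs_nonneg _).trans (hβ 0)
  have hβ'₀ : 0 ≤ β' := (abs_nonneg _).trans (hβ' 0)
  have hD₀ : 0 ≤ D := (one_div_nonneg.2 (Real.sqrt_nonneg _)).trans (hD k k)
  have hWs₀ : 0 ≤ Ws := (sum_nonneg fun j _ => abs_nonneg _).trans (hWs ℓ)
  have hR₀ : 0 ≤ R := le_trans (by positivity) (hR k)
  have hXb₀ : 0 ≤ Xb := (abs_nonneg _).trans (hXb k)
  have hΓ₀ : 0 ≤ Γ := le_trans (by positivity) hΓ
  have hNΓ₂ := mul_le_mul_of_nonneg_left hΓ (by positivity : (0 : ℝ) ≤ N * Δt)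
  have hpow : (1 + Δt * (1 + β' * D * Ws)) ^ N ≤ 1 + N * Γ * Δt :=
    (one_add_pow_le_one_add_two_mul (by positivity) (by linarith)).trans (by linarith)
  calc (R + Xb) * ‖q.1‖ ≤ (R + Xb) * ((1 + N * Γ * Δt) * (Δt * β' * D * R)) := by
        gcongr; exact (norm_fst_le q).trans (hqle.trans (by gcongr))
    _ ≤ _ := by
        have hK : 0 ≤ β' * D * Δt * (1 + N * Γ * Δt) := by positivity
        nlinarith [mul_nonneg (mul_nonneg hK hR₀) hXb₀, mul_nonneg hK (sq_nonneg Xb)]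

end GCN

theorem stmt_17_general {v N : ℕ} (G : SimpleGraph (Fin v)) [DecidableRel G.Adj]
    (d : Fin v → ℝ)
    (Δt : ℝ) (hΔt : 0 < Δt) (hΔt2 : Δt ≤ 1 / 2)
    (σ : ℝ → ℝ) (hσdiff : Differentiable ℝ σ)
    (β β' : ℝ) (hβ : ∀ x : ℝ, |σ x| ≤ β) (hβ' : ∀ x : ℝ, |deriv σ x| ≤ β')
    (W : Fin N → Fin v → ℝ) (X0 Y0 Xbar : Fin v → ℝ)
    (Dhat Γ : ℝ)
    (hDhat : Dhat = ⨆ i : Fin v, ⨆ j : Fin v, 1 / Real.sqrt (d i * d j))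
    (hΓ : Γ = 6 + 4 * β' * Dhat * ⨆ n : Fin N, ∑ i : Fin v, |W n i|)
    (hNΓ : (N : ℝ) * Γ * Δt ≤ 1)
    (ℓ : Fin N) (k : Fin v) :
    let J : (Fin N → Fin v → ℝ) → ℝ := fun Wts =>
      (1 / (2 * (v : ℝ))) * ∑ i : Fin v, ((gcnForward G d σ Δt Wts (X0, Y0)).1 i - Xbar i) ^ 2
    ∃ Dg : ℝ,
      HasDerivAt (fun a : ℝ => J (Function.update W ℓ (Function.update (W ℓ) k a)))
          Dg (W ℓ k) ∧
        |Dg| ≤ β' * Dhat * Δt * (1 + (N : ℝ) * Γ * Δt) *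
          ((⨆ i : Fin v, (|X0 i| + |Y0 i|)) + (⨆ i : Fin v, |Xbar i|)
            + β * Real.sqrt ((N : ℝ) * Δt)) ^ 2 := by
  intro J
  have : NeZero v := NeZero.of_pos k.pos
  have hβ₀ : 0 ≤ β := (abs_nonneg _).trans (hβ 0)
  have hβ'₀ : 0 ≤ β' := (abs_nonneg _).trans (hβ' 0)
  have hD : ∀ i j, 1 / √(d i * d j) ≤ Dhat := fun i j => hDhat ▸
    (le_ciSup (Finite.bddAbove_range fun j => 1 / √(d i * d j)) j).trans
      (le_ciSup (Finite.bddAbove_range fun i => ⨆ j, 1 / √(d i * d j)) i)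
  have hD₀ : 0 ≤ Dhat := (one_div_nonneg.2 (Real.sqrt_nonneg _)).trans (hD k k)
  have hWs : ∀ n, ∑ i, |W n i| ≤ ⨆ n : Fin N, ∑ i : Fin v, |W n i| :=
    le_ciSup (Finite.bddAbove_range _)
  have hWs₀ := (sum_nonneg fun i _ => abs_nonneg (W ℓ i)).trans (hWs ℓ)
  have hΓ₆ : 6 ≤ Γ := by
    rw [hΓ]; linarith [(by positivity : 0 ≤ 4 * β' * Dhat * ⨆ n : Fin N, ∑ i : Fin v, |W n i|)]
  have hNΔt : (N : ℝ) * Δt ≤ 4 / 9 := by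
    nlinarith [mul_le_mul_of_nonneg_left hΓ₆ (by positivity : (0 : ℝ) ≤ N * Δt)]
  have hR : ∀ j, |X0 j| + |Y0 j| + 3 / 2 * N * Δt * β
      ≤ (⨆ i : Fin v, (|X0 i| + |Y0 i|)) + β * √(N * Δt) := fun j => by
    have := three_halves_mul_le_sqrt (by positivity) hNΔt
    have := le_ciSup (Finite.bddAbove_range fun i => |X0 i| + |Y0 i|) j
    nlinarith
  obtain ⟨Dg, hDg, hle⟩ := exists_hasDerivAt_gcnLoss_le G d hσdiff hβ hβ' hΔt.le hΔt2 hD W hWs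
    (by rw [hΓ]; nlinarith) hNΓ (X0, Y0) hR Xbar (le_ciSup (Finite.bddAbove_range _)) ℓ k
  exact ⟨Dg, hDg, hle.trans_eq (by ring)⟩

/-- **Upper bound on gradients of deep GraphCON-GCN.** Assume `Δt ≤ 1/2` and
`NΓΔt ≤ 1`. With `J = (1/2v) ∑_i (X^N_i − X̄_i)²` the loss of the `N`-layer
GraphCON-GCN network regarded as a function of the weights, for every layer `ℓ` and node
`k` the partial derivative of `J` with respect to `w^ℓ_k` satisfies
`|∂J/∂w^ℓ_k| ≤ β' D̂ Δt (1 + NΓΔt)(max_i(|X⁰_i|+|Y⁰_i|) + max_i|X̄_i| + β√(NΔt))²`,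
where `D̂ = max_{i,j} 1/√(d_i d_j)` and `Γ = 6 + 4β'D̂ max_n ‖wⁿ‖₁`. -/
theorem stmt_17 {v N : ℕ} (hv : 0 < v) (G : SimpleGraph (Fin v)) [DecidableRel G.Adj]
    (d : Fin v → ℝ) (hd : ∀ i : Fin v, 1 ≤ d i)
    (Δt : ℝ) (hΔt : 0 < Δt) (hΔt2 : Δt ≤ 1 / 2)
    (σ : ℝ → ℝ) (hσdiff : Differentiable ℝ σ)
    (β β' : ℝ) (hβ : ∀ x : ℝ, |σ x| ≤ β) (hβ' : ∀ x : ℝ, |deriv σ x| ≤ β')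
    (W : Fin N → Fin v → ℝ) (X0 Y0 Xbar : Fin v → ℝ)
    (Dhat Γ : ℝ)
    (hDhat : Dhat = ⨆ i : Fin v, ⨆ j : Fin v, 1 / Real.sqrt (d i * d j))
    (hΓ : Γ = 6 + 4 * β' * Dhat * ⨆ n : Fin N, ∑ i : Fin v, |W n i|)
    (hNΓ : (N : ℝ) * Γ * Δt ≤ 1)
    (ℓ : Fin N) (k : Fin v) :
    let J : (Fin N → Fin v → ℝ) → ℝ := fun Wts =>
      (1 / (2 * (v : ℝ))) * ∑ i : Fin v, ((gcnForward G d σ Δt Wts (X0, Y0)).1 i - Xbar i) ^ 2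
    ∃ Dg : ℝ,
      HasDerivAt (fun a : ℝ => J (Function.update W ℓ (Function.update (W ℓ) k a)))
          Dg (W ℓ k) ∧
        |Dg| ≤ β' * Dhat * Δt * (1 + (N : ℝ) * Γ * Δt) *
          ((⨆ i : Fin v, (|X0 i| + |Y0 i|)) + (⨆ i : Fin v, |Xbar i|)
            + β * Real.sqrt ((N : ℝ) * Δt)) ^ 2 :=
  stmt_17_general G d Δt hΔt hΔt2 σ hσdiff β β' hβ hβ' W X0 Y0 Xbar Dhat Γ hDhat hΓ hNΓ ℓ k
end
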